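/- arXiv:1707.00639 — 3 statements merged into one kernel-verified Lean document; each statement's English description precedes it below -/
import Mathlib

section
/- Let e be a data-differentiated execution with a unique maximal priority p such that for each priority q the projection of e to the values of priority q is linearizable w.r.t. SeqPQ, and suppose a <pb a1 <pb ... <pb am <pb b holds for values a, a1, ..., am, b of priority p. Then one of the following holds: a <pb^A b, or a <pb^B b, or a <pb^C b, or a <pb^A ai <pb^B b for some i, or a <pb^B ai <pb^A b for some i. -/
open Classical

universe u v w

/-- Operation symbols of the priority queue: `put(a,p)`, `rm(a)`, and `rm(empty)`
(the latter carrying a data-value argument for uniformity). -/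
inductive PQOp (D : Type u) (P : Type v) : Type (max u v) where
  | put (a : D) (p : P)
  | rm (a : D)
  | rmEmpty (a : D)

namespace PQOp
variable {D : Type u} {P : Type v}

/-- The data value of an operation symbol. -/
def val : PQOp D P → D
  | put a _ => a
  | rm a => a
  | rmEmpty a => a

/-- Renaming of the data values of an operation symbol (priorities unchanged). -/
def rename (r : D → D) : PQOp D P → PQOp D P
  | put a p => put (r a) p
  | rm a => rm (r a)
  | rmEmpty a => rmEmpty (r a)

end PQOp

/-- Call and return actions of a concurrent execution, carrying operation identifiers. -/
inductive PQEvent (O : Type w) (D : Type u) (P : Type v) : Type (max u v w) where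
  | call (o : O) (m : PQOp D P)
  | ret (o : O) (m : PQOp D P)

namespace PQEvent
variable {O : Type w} {D : Type u} {P : Type v}

/-- The operation identifier of an action. -/
def ident : PQEvent O D P → O
  | call o _ => o
  | ret o _ => o

/-- The method (with arguments) of an action. -/
def meth : PQEvent O D P → PQOp D P
  | call _ m => m
  | ret _ m => m

/-- The data value of an action. -/
def val (a : PQEvent O D P) : D := a.meth.val

/-- Renaming of the data values of an action (identifiers and priorities unchanged). -/
def rename (r : D → D) : PQEvent O D P → PQEvent O D P
  | call o m => call o (m.rename r)
  | ret o m => ret o (m.rename r)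

end PQEvent

section PQ

variable {D : Type u} {P : Type v} {O : Type w} [PartialOrder P]

/-- States of the priority-queue LTS: maps from priorities to finite sequences of values. -/
abbrev PQState (D : Type u) (P : Type v) := P → List D

/-- The initial state of the priority-queue LTS. -/
def pqInit (D : Type u) (P : Type v) : PQState D P := fun _ => []

/-- One transition of the priority-queue LTS. -/
def pqStep (q : PQState D P) : PQOp D P → PQState D P → Prop
  | PQOp.put a p, q' => q' p = a :: q p ∧ ∀ p', p' ≠ p → q' p' = q p'
  | PQOp.rm a, q' => ∃ p l, q p = l ++ [a] ∧ q' p = l ∧ (∀ p', p' ≠ p → q' p' = q p') ∧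
      (∀ p', p' < p → q p' = [])
  | PQOp.rmEmpty _, q' => q' = q ∧ ∀ p, q p = []

/-- Paths of the priority-queue LTS. -/
inductive pqReach : PQState D P → List (PQOp D P) → PQState D P → Prop where
  | nil (q : PQState D P) : pqReach q [] q
  | cons {q q' q'' : PQState D P} {op : PQOp D P} {l : List (PQOp D P)} :
      pqStep q op q' → pqReach q' l q'' → pqReach q (op :: l) q''

/-- `SeqPQ`: the set of traces of the priority-queue LTS. -/
def SeqPQ (e : List (PQOp D P)) : Prop := ∃ q, pqReach (pqInit D P) e q

/-- A sequential execution is data-differentiated if each value is put at most once. -/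
def SeqDiff (e : List (PQOp D P)) : Prop :=
  ∀ (i j : ℕ) a p p', e[i]? = some (PQOp.put a p) → e[j]? = some (PQOp.put a p') → i = j

/-- The priorities occurring in put operations of a sequential execution. -/
def prioritiesSeq (e : List (PQOp D P)) : Set P := {p | ∃ a, PQOp.put a p ∈ e}

/-- The priorities of unmatched put operations of a sequential execution. -/
def unmatchedPrioritiesSeq (e : List (PQOp D P)) : Set P :=
  {p | ∃ a, PQOp.put a p ∈ e ∧ PQOp.rm a ∉ e}

/-- Every put is matched by a remove. -/
def matchedSeq (e : List (PQOp D P)) : Prop :=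
  ∀ a p, PQOp.put a p ∈ e → PQOp.rm a ∈ e

/-- Every put with priority strictly below `p` is matched. -/
def matchedBelowSeq (e : List (PQOp D P)) (p : P) : Prop :=
  ∀ a q, PQOp.put a q ∈ e → q < p → PQOp.rm a ∈ e

def HasEmptyRemovesSeq (e : List (PQOp D P)) : Prop := ∃ d, PQOp.rmEmpty d ∈ e

def HasUnmatchedMaxPrioritySeq (e : List (PQOp D P)) : Prop :=
  ∃ p, p ∈ prioritiesSeq e ∧ (∀ q ∈ prioritiesSeq e, ¬ p < q) ∧
    p ∈ unmatchedPrioritiesSeq e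

def UnmatchedMaxPrioritySeqP (e : List (PQOp D P)) (x : D) (p : P) : Prop :=
  ∃ u v, e = u ++ PQOp.put x p :: v ∧
    (∀ q ∈ prioritiesSeq (u ++ v), ¬ p < q) ∧ p ∉ prioritiesSeq v

def UnmatchedMaxPrioritySeq (e : List (PQOp D P)) (x : D) : Prop :=
  ∃ p, UnmatchedMaxPrioritySeqP e x p

def MatchedMaxPrioritySeqP (e : List (PQOp D P)) (x : D) (p : P) : Prop :=
  ∃ u v w, e = u ++ PQOp.put x p :: (v ++ PQOp.rm x :: w) ∧
    (∀ q ∈ prioritiesSeq (u ++ v ++ w), ¬ p < q) ∧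
    (∀ q ∈ unmatchedPrioritiesSeq (u ++ v ++ w), ¬ p ≤ q) ∧
    matchedBelowSeq (u ++ v) p ∧ p ∉ prioritiesSeq (v ++ w)

def MatchedMaxPrioritySeq (e : List (PQOp D P)) (x : D) : Prop :=
  ∃ p, MatchedMaxPrioritySeqP e x p

/-- `MatchedMaxPriority^=`: additionally at least one value other than `x` has priority `p`. -/
def MatchedMaxPriorityEqSeq (e : List (PQOp D P)) (x : D) : Prop :=
  ∃ p, MatchedMaxPrioritySeqP e x p ∧ ∃ z, z ≠ x ∧ PQOp.put z p ∈ e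

noncomputable def projSeqVals (Dset : Set D) (e : List (PQOp D P)) : List (PQOp D P) :=
  e.filter fun op => decide (op.val ∈ Dset)

noncomputable def removeValSeq (x : D) (e : List (PQOp D P)) : List (PQOp D P) :=
  e.filter fun op => decide (op.val ≠ x)

/-- Projection of a sequential execution to a set of positions. -/
noncomputable def seqProjIdx (l : List (PQOp D P)) (I : Set ℕ) : List (PQOp D P) :=
  (l.zipIdx.filter fun x => decide (x.2 ∈ I)).map Prod.fst

/-- The recursive procedure `Check-PQ-Seq`. -/
inductive CheckPQSeq : List (PQOp D P) → Prop where
  | nil : CheckPQSeq ([] : List (PQOp D P))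
  | emptyRemove (u v : List (PQOp D P)) (d : D) :
      matchedSeq u → CheckPQSeq (u ++ v) →
      CheckPQSeq (u ++ PQOp.rmEmpty d :: v)
  | unmatchedMax (e : List (PQOp D P)) (x : D) :
      ¬ HasEmptyRemovesSeq e → HasUnmatchedMaxPrioritySeq e →
      UnmatchedMaxPrioritySeq e x → CheckPQSeq (removeValSeq x e) → CheckPQSeq e
  | matchedMax (e : List (PQOp D P)) (x : D) :
      ¬ HasEmptyRemovesSeq e → ¬ HasUnmatchedMaxPrioritySeq e →
      MatchedMaxPrioritySeq e x → CheckPQSeq (removeValSeq x e) → CheckPQSeq e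

/-- Well-formed (completed) executions. -/
def IsExec (e : List (PQEvent O D P)) : Prop :=
  (∀ (i j : ℕ) o m m', e[i]? = some (PQEvent.call o m) → e[j]? = some (PQEvent.call o m') → i = j) ∧
  (∀ (i j : ℕ) o m m', e[i]? = some (PQEvent.ret o m) → e[j]? = some (PQEvent.ret o m') → i = j) ∧
  (∀ (j : ℕ) o m, e[j]? = some (PQEvent.ret o m) → ∃ i < j, e[i]? = some (PQEvent.call o m)) ∧
  (∀ (i : ℕ) o m, e[i]? = some (PQEvent.call o m) → ∃ j, i < j ∧ e[j]? = some (PQEvent.ret o m))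

/-- The operations (identifiers) of an execution. -/
def opsOf (e : List (PQEvent O D P)) : Set O :=
  {o | ∃ (i : ℕ) (m : PQOp D P), e[i]? = some (PQEvent.call o m)}

/-- Operation `o` has method (and arguments) `m` in `e`. -/
def hasMethod (e : List (PQEvent O D P)) (o : O) (m : PQOp D P) : Prop :=
  ∃ i : ℕ, e[i]? = some (PQEvent.call o m)

/-- Happens-before: the return of `o1` occurs before the call of `o2`. -/
def hb (e : List (PQEvent O D P)) (o1 o2 : O) : Prop :=
  ∃ (i j : ℕ) (m1 m2 : PQOp D P), i < j ∧ e[i]? = some (PQEvent.ret o1 m1) ∧ e[j]? = some (PQEvent.call o2 m2)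

/-- `f` witnesses that the sequential execution `l` is a linearization of `e`. -/
def IsLin (e : List (PQEvent O D P)) (l : List (PQOp D P)) (f : O → ℕ) : Prop :=
  Set.BijOn f (opsOf e) {i | i < l.length} ∧
  (∀ o m, hasMethod e o m → l[f o]? = some m) ∧
  (∀ o1 o2, hb e o1 o2 → f o1 < f o2)

/-- `e ⊑ l`: `e` is linearizable w.r.t. the sequential execution `l`. -/
def LinTo (e : List (PQEvent O D P)) (l : List (PQOp D P)) : Prop := ∃ f, IsLin e l f

/-- A concurrent execution is data-differentiated if each value is put at most once. -/
def ExecDiff (e : List (PQEvent O D P)) : Prop :=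
  ∀ (i j : ℕ) o o' a p p', e[i]? = some (PQEvent.call o (PQOp.put a p)) →
    e[j]? = some (PQEvent.call o' (PQOp.put a p')) → i = j

/-- Projection of an execution to a set of data values. -/
noncomputable def projVals (Dset : Set D) (e : List (PQEvent O D P)) : List (PQEvent O D P) :=
  e.filter fun a => decide (a.val ∈ Dset)

/-- `e ∖ x`. -/
noncomputable def removeValE (x : D) (e : List (PQEvent O D P)) : List (PQEvent O D P) :=
  e.filter fun a => decide (a.val ≠ x)

/-- `e ∖ o` for an operation identifier `o`. -/
noncomputable def removeIdE (o : O) (e : List (PQEvent O D P)) : List (PQEvent O D P) :=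
  e.filter fun a => decide (a.ident ≠ o)

/-- Projection of an execution to a set of operations. -/
noncomputable def projIds (S : Set O) (e : List (PQEvent O D P)) : List (PQEvent O D P) :=
  e.filter fun a => decide (a.ident ∈ S)

def putOccurs (e : List (PQEvent O D P)) (a : D) (p : P) : Prop :=
  ∃ o, hasMethod e o (PQOp.put a p)

def rmOccurs (e : List (PQEvent O D P)) (a : D) : Prop :=
  ∃ o, hasMethod e o (PQOp.rm a)

def prioritiesE (e : List (PQEvent O D P)) : Set P := {p | ∃ a, putOccurs e a p}

def HasEmptyRemovesE (e : List (PQEvent O D P)) : Prop :=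
  ∃ o d, hasMethod e o (PQOp.rmEmpty d)

def HasUnmatchedMaxPriorityE (e : List (PQEvent O D P)) : Prop :=
  ∃ p, p ∈ prioritiesE e ∧ (∀ q ∈ prioritiesE e, ¬ p < q) ∧
    ∃ a, putOccurs e a p ∧ ¬ rmOccurs e a

def HasMatchedMaxPriorityE (e : List (PQEvent O D P)) : Prop :=
  ¬ HasEmptyRemovesE e ∧ ¬ HasUnmatchedMaxPriorityE e

/-- `EmptyRemove-Conc(e,o)`: some linearization of `e` places the `rm(empty)` operation `o`
after a matched prefix. -/
def EmptyRemoveConc (e : List (PQEvent O D P)) (o : O) : Prop :=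
  ∃ l f, IsLin e l f ∧ (∃ d, hasMethod e o (PQOp.rmEmpty d)) ∧ matchedSeq (l.take (f o))

def UnmatchedMaxPriorityConc (e : List (PQEvent O D P)) (x : D) : Prop :=
  ∃ l, LinTo e l ∧ UnmatchedMaxPrioritySeq l x

def MatchedMaxPriorityConc (e : List (PQEvent O D P)) (x : D) : Prop :=
  ∃ l, LinTo e l ∧ MatchedMaxPrioritySeq l x

def MatchedMaxPriorityEqConc (e : List (PQEvent O D P)) (x : D) : Prop :=
  ∃ l, LinTo e l ∧ MatchedMaxPriorityEqSeq l x

/-- The recursive procedure `Check-PQ-Conc`. -/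
inductive CheckPQConc : List (PQEvent O D P) → Prop where
  | nil : CheckPQConc ([] : List (PQEvent O D P))
  | emptyRemove (e : List (PQEvent O D P)) (o : O) :
      HasEmptyRemovesE e → EmptyRemoveConc e o →
      CheckPQConc (removeIdE o e) → CheckPQConc e
  | unmatchedMax (e : List (PQEvent O D P)) (x : D) :
      ¬ HasEmptyRemovesE e → HasUnmatchedMaxPriorityE e →
      UnmatchedMaxPriorityConc e x → CheckPQConc (removeValE x e) → CheckPQConc e
  | matchedMax (e : List (PQEvent O D P)) (x : D) :
      ¬ HasEmptyRemovesE e → ¬ HasUnmatchedMaxPriorityE e →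
      MatchedMaxPriorityConc e x → CheckPQConc (removeValE x e) → CheckPQConc e

/-- The procedure `Check-PQ-Conc-NonRec`: `Check-PQ-Conc` with recursive calls replaced
by `true`. -/
def CheckPQConcNR (e : List (PQEvent O D P)) : Prop :=
  e = [] ∨
  (HasEmptyRemovesE e ∧ ∃ o, EmptyRemoveConc e o) ∨
  (¬ HasEmptyRemovesE e ∧ HasUnmatchedMaxPriorityE e ∧ ∃ x, UnmatchedMaxPriorityConc e x) ∨
  (¬ HasEmptyRemovesE e ∧ ¬ HasUnmatchedMaxPriorityE e ∧ ∃ x, MatchedMaxPriorityConc e x)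

def isPutOf (e : List (PQEvent O D P)) (o : O) (a : D) : Prop :=
  ∃ p, hasMethod e o (PQOp.put a p)

def isRmOf (e : List (PQEvent O D P)) (o : O) (a : D) : Prop :=
  hasMethod e o (PQOp.rm a)

def opValIs (e : List (PQEvent O D P)) (o : O) (a : D) : Prop :=
  isPutOf e o a ∨ isRmOf e o a

def putPutHB (e : List (PQEvent O D P)) (a b : D) : Prop :=
  ∃ o1 o2, isPutOf e o1 a ∧ isPutOf e o2 b ∧ hb e o1 o2

def putRmHB (e : List (PQEvent O D P)) (a b : D) : Prop :=
  ∃ o1 o2, isPutOf e o1 a ∧ isRmOf e o2 b ∧ hb e o1 o2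

def rmRmHB (e : List (PQEvent O D P)) (a b : D) : Prop :=
  ∃ o1 o2, isRmOf e o1 a ∧ isRmOf e o2 b ∧ hb e o1 o2

def rmPutHB (e : List (PQEvent O D P)) (a b : D) : Prop :=
  ∃ o1 o2, isRmOf e o1 a ∧ isPutOf e o2 b ∧ hb e o1 o2

/-- The values occurring in an execution. -/
def valuesOfE (e : List (PQEvent O D P)) : Set D := {a | ∃ o, opValIs e o a}

/-- The left-right constraint of `x`: edges of the graph `G`. -/
def lrEdge (e : List (PQEvent O D P)) (x : D) (d1 d2 : D) : Prop :=
  d1 ∈ valuesOfE e ∧ d2 ∈ valuesOfE e ∧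
  ((d2 = x ∧ (putPutHB e d1 x ∨ putRmHB e d1 x)) ∨
   (d1 = x ∧ (rmRmHB e x d2 ∨ ¬ rmOccurs e d2)) ∨
   putRmHB e d1 d2)

/-- `p` is the unique maximal priority occurring in `e`. -/
def UniqueMaxPriorityE (e : List (PQEvent O D P)) (p : P) : Prop :=
  p ∈ prioritiesE e ∧ ∀ q ∈ prioritiesE e, q ≠ p → q < p

/-- The values added with priority `q` in `e`. -/
def valsOfPri (e : List (PQEvent O D P)) (q : P) : Set D := {a | putOccurs e a q}

/-- For each priority, the projection of `e` to the values of that priority is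
linearizable w.r.t. `SeqPQ`. -/
def SinglePriLin (e : List (PQEvent O D P)) : Prop :=
  ∀ q : P, ∃ l, SeqPQ l ∧ LinTo (projVals (valsOfPri e q) e) l

def callPutAt (e : List (PQEvent O D P)) (a : D) (p : P) (i : ℕ) : Prop :=
  ∃ o, e[i]? = some (PQEvent.call o (PQOp.put a p))

def retPutAt (e : List (PQEvent O D P)) (a : D) (i : ℕ) : Prop :=
  ∃ o p, e[i]? = some (PQEvent.ret o (PQOp.put a p))

def callRmAt (e : List (PQEvent O D P)) (a : D) (i : ℕ) : Prop :=
  ∃ o, e[i]? = some (PQEvent.call o (PQOp.rm a))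

def retRmAt (e : List (PQEvent O D P)) (a : D) (i : ℕ) : Prop :=
  ∃ o, e[i]? = some (PQEvent.ret o (PQOp.rm a))

/-- Index `i` lies in the interval of value `z`: from `ret(put,z,_)` to `call(rm,z)`,
or to the last index of `e` if `rm(z)` is absent. -/
def InInterval (e : List (PQEvent O D P)) (z : D) (i : ℕ) : Prop :=
  ∃ j, retPutAt e z j ∧ j ≤ i ∧
    ((∃ k, callRmAt e z k ∧ i ≤ k) ∨ (¬ rmOccurs e z ∧ i ≤ e.length - 1))

/-- Gap-points of a value `x` of priority `p`. -/
def GapPoint (e : List (PQEvent O D P)) (x : D) (p : P) (i : ℕ) : Prop :=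
  i < e.length ∧
  (∃ j, callPutAt e x p j ∧ j ≤ i) ∧
  (∃ j, callRmAt e x j ∧ j ≤ i) ∧
  (∃ j, retRmAt e x j ∧ i < j) ∧
  ∀ z q, putOccurs e z q → q < p → ¬ InInterval e z i

def pbA (e : List (PQEvent O D P)) (a b : D) : Prop := putPutHB e a b
def pbB (e : List (PQEvent O D P)) (a b : D) : Prop := rmRmHB e a b
def pbC (e : List (PQEvent O D P)) (a b : D) : Prop := rmPutHB e a b
def pb (e : List (PQEvent O D P)) (a b : D) : Prop := pbA e a b ∨ pbB e a b ∨ pbC e a b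
def pbStar (e : List (PQEvent O D P)) : D → D → Prop := Relation.TransGen (pb e)

/-- The levels `UVSet_i(e,x)` (indexed from 0). -/
def UVSetN (e : List (PQEvent O D P)) (x : D) : ℕ → Set O
  | 0 => {o | ∃ a, a ≠ x ∧ opValIs e o a ∧ ∃ o', opValIs e o' a ∧
        ∃ ox, (isPutOf e ox x ∨ isRmOf e ox x) ∧ hb e o' ox}
  | n + 1 => {o | (∀ k, k ≤ n → o ∉ UVSetN e x k) ∧
        ∃ a, opValIs e o a ∧ ∃ o', opValIs e o' a ∧
          ∃ o'', o'' ∈ UVSetN e x n ∧ hb e o' o''}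
  termination_by n => n
  decreasing_by all_goals omega

def UVSet (e : List (PQEvent O D P)) (x : D) : Set O := ⋃ n, UVSetN e x n

/-- Data independence of a set of sequential executions. -/
def DataIndepSeqSet (S : Set (List (PQOp D P))) : Prop :=
  (∀ e ∈ S, ∃ e' ∈ S, SeqDiff e' ∧ ∃ r : D → D, e = e'.map (PQOp.rename r)) ∧
  (∀ e ∈ S, ∀ r : D → D, e.map (PQOp.rename r) ∈ S)

/-- Data independence of a set of (concurrent) executions. -/
def DataIndepExecSet (E : Set (List (PQEvent O D P))) : Prop :=
  (∀ e ∈ E, ∃ e' ∈ E, ExecDiff e' ∧ ∃ r : D → D, e = e'.map (PQEvent.rename r)) ∧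
  (∀ e ∈ E, ∀ r : D → D, e.map (PQEvent.rename r) ∈ E)

/-- `e|⪯p`: projection of `e` to the values whose priority is `⪯ p`. -/
noncomputable def projLE (e : List (PQEvent O D P)) (p : P) : List (PQEvent O D P) :=
  projVals {a | ∃ q, putOccurs e a q ∧ q ≤ p} e

/-- `e` is `UnmatchedMaxPriority`-linearizable. -/
def UnmatchedLin (e : List (PQEvent O D P)) : Prop :=
  HasUnmatchedMaxPriorityE e → ∃ x, UnmatchedMaxPriorityConc e x

/-- `e` is `MatchedMaxPriority`-linearizable. -/
def MatchedLin (e : List (PQEvent O D P)) : Prop :=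
  HasMatchedMaxPriorityE e → ∃ x, MatchedMaxPriorityConc e x

def comparablePri (p q : P) : Prop := p ≤ q ∨ q ≤ p

/-- The operation symbol `op` is on a value whose priority (in `l`) is comparable with `p`. -/
def opComparable (l : List (PQOp D P)) (p : P) (op : PQOp D P) : Prop :=
  ∃ q, PQOp.put op.val q ∈ l ∧ comparablePri p q

/-- `op` is a put with priority `p`. -/
def isPutPri (p : P) (op : PQOp D P) : Prop := ∃ a, op = PQOp.put a p

end PQ


/- ===================== auxiliary development ===================== -/


namespace PBAux

theorem fm_idx {α β : Type*} (g : α → Option β) (l : List α) {i : ℕ} {x : α} {y : β}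
    (h : l[i]? = some x) (hg : g x = some y) :
    (l.filterMap g)[((l.take i).filterMap g).length]? = some y := by
  obtain ⟨hi, hx⟩ := List.getElem?_eq_some_iff.mp h
  have hdecomp : l.filterMap g =
      (l.take i).filterMap g ++ y :: (l.drop (i+1)).filterMap g := by
    conv_lhs => rw [← List.take_append_drop i l]
    rw [List.filterMap_append, List.drop_eq_getElem_cons hi, hx, List.filterMap_cons, hg]
  rw [hdecomp, List.getElem?_append_right (le_refl _)]
  simp

theorem fm_idx_mono {α β : Type*} (g : α → Option β) (l : List α) {i j : ℕ} {x : α} {y : β}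
    (hij : i < j) (h : l[i]? = some x) (hg : g x = some y) :
    ((l.take i).filterMap g).length < ((l.take j).filterMap g).length := by
  have h1 : (l.take (i+1)).filterMap g = (l.take i).filterMap g ++ [y] := by
    rw [List.take_succ, h, List.filterMap_append]
    simp [hg]
  have h2 : List.Sublist (l.take (i+1)) (l.take j) := by
    have : l.take (i+1) = (l.take j).take (i+1) := by
      rw [List.take_take, min_eq_left (by omega)]
    rw [this]; exact List.take_sublist _ _
  have h3 := (h2.filterMap g).length_le
  rw [h1] at h3; simp at h3; omega

theorem fm_idx_inv {α β : Type*} (g : α → Option β) :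
    ∀ (l : List α) (k : ℕ) (y : β), (l.filterMap g)[k]? = some y →
      ∃ (i : ℕ) (x : α), l[i]? = some x ∧ g x = some y ∧ ((l.take i).filterMap g).length = k := by
  intro l
  induction l with
  | nil => intro k y h; simp at h
  | cons a t ih =>
    intro k y h
    rw [List.filterMap_cons] at h
    cases hga : g a with
    | none =>
      rw [hga] at h
      obtain ⟨i, x, h1, h2, h3⟩ := ih k y h
      refine ⟨i+1, x, by simpa using h1, h2, ?_⟩
      rw [List.take_succ_cons, List.filterMap_cons, hga]; exact h3
    | some b =>
      rw [hga] at h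
      cases k with
      | zero =>
        simp at h
        exact ⟨0, a, by simp, by rw [hga, h], by simp⟩
      | succ k =>
        rw [List.getElem?_cons_succ] at h
        obtain ⟨i, x, h1, h2, h3⟩ := ih k y h
        refine ⟨i+1, x, by simpa using h1, h2, ?_⟩
        rw [List.take_succ_cons, List.filterMap_cons, hga]
        simp [h3]



end PBAux


namespace PBAux

variable {D : Type u} {P : Type v} {O : Type w} [PartialOrder P]

/-- extractor of put values -/
def gput : PQOp D P → Option D
  | PQOp.put a _ => some a
  | _ => none

/-- extractor of rm values -/
def grm : PQOp D P → Option D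
  | PQOp.rm a => some a
  | _ => none

def putsOf (t : List (PQOp D P)) : List D := t.filterMap gput
def rmsOf (t : List (PQOp D P)) : List D := t.filterMap grm

theorem gput_eq {op : PQOp D P} {y : D} (h : gput op = some y) : ∃ q, op = PQOp.put y q := by
  cases op with
  | put a q => simp [gput] at h; exact ⟨q, by rw [h]⟩
  | rm a => simp [gput] at h
  | rmEmpty a => simp [gput] at h

theorem grm_eq {op : PQOp D P} {y : D} (h : grm op = some y) : op = PQOp.rm y := by
  cases op with
  | put a q => simp [grm] at h
  | rm a => simp [grm] at h; rw [h]
  | rmEmpty a => simp [grm] at h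

theorem pqReach_append {q0 qf : PQState D P} :
    ∀ {t1 t2 : List (PQOp D P)}, pqReach q0 (t1 ++ t2) qf →
      ∃ qm, pqReach q0 t1 qm ∧ pqReach qm t2 qf := by
  intro t1
  induction t1 generalizing q0 with
  | nil => intro t2 h; exact ⟨q0, .nil q0, h⟩
  | cons op t ih =>
    intro t2 h
    cases h with
    | cons hstep hr =>
      obtain ⟨qm, h1, h2⟩ := ih hr
      exact ⟨qm, .cons hstep h1, h2⟩

theorem pq_inv {p : P} :
    ∀ {t : List (PQOp D P)} {q0 qf : PQState D P}, pqReach q0 t qf →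
    (∀ a pr, PQOp.put a pr ∈ t → pr = p) →
    ∀ pend : List D, (∀ p', p' ≠ p → q0 p' = []) → q0 p = pend.reverse →
    rmsOf t <+: (pend ++ putsOf t) := by
  intro t
  induction t with
  | nil => intro q0 qf _ _ pend _ _; simp [rmsOf, putsOf]
  | cons op tl ih =>
    intro q0 qf hr hpri pend h0 hq0
    cases hr with
    | cons hstep hrest =>
      rename_i q1
      cases op with
      | put a pr =>
        have hpp : pr = p := hpri a pr (by simp)
        subst pr
        obtain ⟨ha, hb⟩ := hstep
        have h1 : ∀ p', p' ≠ p → q1 p' = [] := fun p' hp' => by rw [hb p' hp']; exact h0 p' hp'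
        have h2 : q1 p = (pend ++ [a]).reverse := by rw [ha, hq0]; simp
        have := ih hrest (fun a' pr' h' => hpri a' pr' (List.mem_cons_of_mem _ h')) (pend ++ [a]) h1 h2
        simpa [rmsOf, putsOf, gput, grm, List.filterMap_cons] using this
      | rm a =>
        obtain ⟨pr, l', hqa, hqb, hqc, _⟩ := hstep
        have hpp : pr = p := by
          by_contra hne
          rw [h0 pr hne] at hqa
          exact absurd hqa (by simp)
        subst pr
        have hpend : pend = a :: l'.reverse := by
          have : pend.reverse = l' ++ [a] := by rw [← hq0, hqa]
          have := congrArg List.reverse this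
          simpa using this
        have h1 : ∀ p', p' ≠ p → q1 p' = [] := fun p' hp' => by rw [hqc p' hp']; exact h0 p' hp'
        have h2 : q1 p = (l'.reverse).reverse := by rw [hqb]; simp
        have hres := ih hrest (fun a' pr' h' => hpri a' pr' (List.mem_cons_of_mem _ h')) l'.reverse h1 h2
        have : rmsOf (PQOp.rm a :: tl) = a :: rmsOf tl := by simp [rmsOf, grm, List.filterMap_cons]
        rw [this, hpend]
        have hput : putsOf (PQOp.rm a :: tl) = putsOf tl := by simp [putsOf, gput, List.filterMap_cons]
        rw [hput, List.cons_append]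
        exact (List.cons_prefix_cons).mpr ⟨rfl, hres⟩
      | rmEmpty a =>
        obtain ⟨hq1, _⟩ := hstep
        subst hq1
        have hres := ih hrest (fun a' pr' h' => hpri a' pr' (List.mem_cons_of_mem _ h')) pend h0 hq0
        simpa [rmsOf, putsOf, grm, gput, List.filterMap_cons] using hres



section SeqLemmas

variable {D : Type u} {P : Type v} [PartialOrder P] {l : List (PQOp D P)} {p : P}

/-- along any prefix of a single-priority trace, removed values form a prefix of put values -/
theorem prefix_inv (hSeq : SeqPQ l) (hp : ∀ a pr, PQOp.put a pr ∈ l → pr = p) (n : ℕ) :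
    rmsOf (l.take n) <+: putsOf (l.take n) := by
  obtain ⟨qf, hr⟩ := hSeq
  have hr' : pqReach (pqInit D P) (l.take n ++ l.drop n) qf := by
    rw [List.take_append_drop]; exact hr
  obtain ⟨qm, h1, _⟩ := pqReach_append hr'
  have := pq_inv (p := p) h1
    (fun a pr h => hp a pr (List.mem_of_mem_take h)) []
    (fun _ _ => rfl) rfl
  simpa using this

variable (hSeq : SeqPQ l) (hp : ∀ a pr, PQOp.put a pr ∈ l → pr = p)
  (honce : ∀ (i j : ℕ) (a : D) (q q' : P),
    l[i]? = some (PQOp.put a q) → l[j]? = some (PQOp.put a q') → i = j)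

include hSeq hp

theorem rm_has_put {j : ℕ} {y : D} (h : l[j]? = some (PQOp.rm y)) :
    ∃ (i : ℕ) (q : P), i < j ∧ l[i]? = some (PQOp.put y q) := by
  have hj : j < l.length := (List.getElem?_eq_some_iff.mp h).1
  have ht : l.take (j+1) = l.take j ++ [PQOp.rm y] := by
    rw [List.take_succ, h]; rfl
  have hymem : y ∈ rmsOf (l.take (j+1)) := by
    rw [ht]
    simp [rmsOf, List.filterMap_append, grm]
  have hpre := prefix_inv hSeq hp (j+1)
  have hymem' : y ∈ putsOf (l.take (j+1)) := hpre.subset hymem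
  obtain ⟨op, hopmem, hop⟩ := List.mem_filterMap.mp hymem'
  obtain ⟨q, rfl⟩ := gput_eq hop
  obtain ⟨i, hilt, hieq⟩ := List.mem_iff_getElem.mp hopmem
  have hlen : (l.take (j+1)).length ≤ j + 1 := by simp
  have hij : i < j + 1 := lt_of_lt_of_le hilt hlen
  have heq : l[i]? = some (PQOp.put y q) := by
    have : (l.take (j+1))[i]? = some (PQOp.put y q) := by
      rw [List.getElem?_eq_getElem hilt, hieq]
    rw [List.getElem?_take] at this
    simpa [hij] using this
  refine ⟨i, q, ?_, heq⟩
  rcases lt_or_eq_of_le (Nat.lt_succ_iff.mp hij) with h' | h'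
  · exact h'
  · subst h'; rw [h] at heq; simp at heq

include honce

theorem rm_unique {j j' : ℕ} {y : D} (h : l[j]? = some (PQOp.rm y))
    (h' : l[j']? = some (PQOp.rm y)) : j = j' := by
  -- suffices to show two distinct rm positions are impossible
  have key : ∀ (j j' : ℕ), j < j' → l[j]? = some (PQOp.rm y) → l[j']? = some (PQOp.rm y) → False := by
    intro j j' hjj hj hj'
    set t := l.take (j'+1) with hts
    have hj'lt : j' < l.length := (List.getElem?_eq_some_iff.mp hj').1
    have htj : t[j]? = some (PQOp.rm y) := by
      rw [hts, List.getElem?_take]; simpa [Nat.lt_succ_of_lt hjj] using hj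
    have htj' : t[j']? = some (PQOp.rm y) := by
      rw [hts, List.getElem?_take]; simpa using hj'
    have hk1 := fm_idx grm t htj (y := y) rfl
    have hk2 := fm_idx grm t htj' (y := y) rfl
    have hklt := fm_idx_mono grm t hjj htj (y := y) rfl
    -- transfer to putsOf via prefix
    obtain ⟨s, hs⟩ := prefix_inv hSeq hp (j'+1)
    rw [← hts] at hs
    simp only [rmsOf, putsOf] at hs
    have hput1 : (List.filterMap gput t)[((t.take j).filterMap grm).length]? = some y := by
      rw [← hs, List.getElem?_append_left ((List.getElem?_eq_some_iff.mp hk1).1)]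
      exact hk1
    have hput2 : (List.filterMap gput t)[((t.take j').filterMap grm).length]? = some y := by
      rw [← hs, List.getElem?_append_left ((List.getElem?_eq_some_iff.mp hk2).1)]
      exact hk2
    obtain ⟨i1, x1, hi1, hx1, hlen1⟩ := fm_idx_inv gput t _ y hput1
    obtain ⟨i2, x2, hi2, hx2, hlen2⟩ := fm_idx_inv gput t _ y hput2
    obtain ⟨q1, rfl⟩ := gput_eq hx1
    obtain ⟨q2, rfl⟩ := gput_eq hx2
    have hi1l : l[i1]? = some (PQOp.put y q1) := by
      have h1 : i1 < t.length := (List.getElem?_eq_some_iff.mp hi1).1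
      have h2 : t.length ≤ j' + 1 := by simp [hts]
      rw [hts, List.getElem?_take] at hi1; simpa [lt_of_lt_of_le h1 h2] using hi1
    have hi2l : l[i2]? = some (PQOp.put y q2) := by
      have h1 : i2 < t.length := (List.getElem?_eq_some_iff.mp hi2).1
      have h2 : t.length ≤ j' + 1 := by simp [hts]
      rw [hts, List.getElem?_take] at hi2; simpa [lt_of_lt_of_le h1 h2] using hi2
    have : i1 = i2 := honce i1 i2 y q1 q2 hi1l hi2l
    subst this
    rw [hlen1] at hlen2
    omega
  rcases lt_trichotomy j j' with hlt | hlt | hlt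
  · exact absurd (key j j' hlt h h') (by simp)
  · exact hlt
  · exact absurd (key j' j hlt h' h) (by simp)

theorem fifo_seq {i j k k' : ℕ} {u v : D} {qu qv : P}
    (hpu : l[i]? = some (PQOp.put u qu)) (hpv : l[j]? = some (PQOp.put v qv))
    (hru : l[k]? = some (PQOp.rm u)) (hrv : l[k']? = some (PQOp.rm v))
    (hij : i < j) (hkk : k' < k) : False := by
  -- first : j < k'
  obtain ⟨j0, q0, hj0lt, hj0⟩ := rm_has_put hSeq hp hrv
  have hjj0 : j0 = j := honce j0 j v q0 qv hj0 hpv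
  have hjlt : j < k' := hjj0 ▸ hj0lt
  -- work inside the prefix t = l.take (k'+1)
  set t := l.take (k'+1) with hts
  have hk'len : k' < l.length := (List.getElem?_eq_some_iff.mp hrv).1
  have hik : i < k' + 1 := by omega
  have hti : t[i]? = some (PQOp.put u qu) := by
    rw [hts, List.getElem?_take]; simpa [hik] using hpu
  have hjk : j < k' + 1 := by omega
  have htj : t[j]? = some (PQOp.put v qv) := by
    rw [hts, List.getElem?_take]; simpa [hjk] using hpv
  have htk' : t[k']? = some (PQOp.rm v) := by
    rw [hts, List.getElem?_take]; simpa using hrv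
  -- positions of u, v in putsOf t
  have hα := fm_idx gput t hti (y := u) rfl
  have hβ := fm_idx gput t htj (y := v) rfl
  have hαβ := fm_idx_mono gput t hij hti (y := u) rfl
  -- v is the last element of rmsOf t
  have htdecomp : t = l.take k' ++ [PQOp.rm v] := by
    rw [hts, List.take_succ, hrv]; rfl
  have hrms : rmsOf t = rmsOf (l.take k') ++ [v] := by
    rw [htdecomp]; simp [rmsOf, List.filterMap_append, grm]
  have hvlast : (rmsOf t)[(rmsOf (l.take k')).length]? = some v := by
    rw [hrms, List.getElem?_append_right (le_refl _)]; simp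
  obtain ⟨s, hs⟩ := prefix_inv hSeq hp (k'+1)
  rw [← hts] at hs
  have hvput : (putsOf t)[(rmsOf (l.take k')).length]? = some v := by
    rw [← hs, List.getElem?_append_left ((List.getElem?_eq_some_iff.mp hvlast).1)]
    exact hvlast
  -- v occurs only once in putsOf t, so position of v is (rmsOf (l.take k')).length
  have hβval : ((t.take j).filterMap gput).length = (rmsOf (l.take k')).length := by
    obtain ⟨i1, x1, hi1, hx1, hlen1⟩ := fm_idx_inv gput t _ v hβ
    obtain ⟨i2, x2, hi2, hx2, hlen2⟩ := fm_idx_inv gput t _ v hvput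
    obtain ⟨q1, rfl⟩ := gput_eq hx1
    obtain ⟨q2, rfl⟩ := gput_eq hx2
    have hi1l : l[i1]? = some (PQOp.put v q1) := by
      have h1 : i1 < t.length := (List.getElem?_eq_some_iff.mp hi1).1
      have h2 : t.length ≤ k' + 1 := by simp [hts]
      rw [hts, List.getElem?_take] at hi1; simpa [lt_of_lt_of_le h1 h2] using hi1
    have hi2l : l[i2]? = some (PQOp.put v q2) := by
      have h1 : i2 < t.length := (List.getElem?_eq_some_iff.mp hi2).1
      have h2 : t.length ≤ k' + 1 := by simp [hts]
      rw [hts, List.getElem?_take] at hi2; simpa [lt_of_lt_of_le h1 h2] using hi2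
    have : i1 = i2 := honce i1 i2 v q1 q2 hi1l hi2l
    subst this
    rw [← hlen1, ← hlen2]
  -- hence u's position is < (rmsOf t).length, so u ∈ rmsOf t
  have hαlt : ((t.take i).filterMap gput).length < (rmsOf t).length := by
    rw [hrms]; simp only [List.length_append, List.length_singleton]
    rw [hβval] at hαβ; omega
  have huin : (rmsOf t)[((t.take i).filterMap gput).length]? = some u := by
    have h1 : (putsOf t)[((t.take i).filterMap gput).length]? = some u := hα
    rw [← hs, List.getElem?_append_left hαlt] at h1
    exact h1
  -- so there is an rm u inside t, i.e. at position ≤ k' < k : contradicts uniqueness of rm u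
  have humem : u ∈ rmsOf t := List.mem_of_getElem? huin
  obtain ⟨op, hopmem, hop⟩ := List.mem_filterMap.mp humem
  have := grm_eq hop; subst this
  obtain ⟨i3, hi3lt, hi3eq⟩ := List.mem_iff_getElem.mp hopmem
  have hlen3 : t.length ≤ k' + 1 := by simp [hts]
  have hi3l : l[i3]? = some (PQOp.rm u) := by
    have : t[i3]? = some (PQOp.rm u) := by rw [List.getElem?_eq_getElem hi3lt, hi3eq]
    rw [hts, List.getElem?_take] at this
    simpa [lt_of_lt_of_le hi3lt hlen3] using this
  have : i3 = k := rm_unique hSeq hp honce hi3l hru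
  omega

end SeqLemmas

section Filter

theorem fil_idx {α : Type*} (q : α → Bool) (l : List α) {i : ℕ} {x : α}
    (h : l[i]? = some x) (hq : q x = true) :
    (l.filter q)[((l.take i).filter q).length]? = some x := by
  obtain ⟨hi, hx⟩ := List.getElem?_eq_some_iff.mp h
  have hdecomp : l.filter q = (l.take i).filter q ++ x :: (l.drop (i+1)).filter q := by
    conv_lhs => rw [← List.take_append_drop i l]
    rw [List.filter_append, List.drop_eq_getElem_cons hi, hx]
    simp [List.filter_cons, hq]
  rw [hdecomp, List.getElem?_append_right (le_refl _)]
  simp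

theorem fil_idx_mono {α : Type*} (q : α → Bool) (l : List α) {i j : ℕ} {x : α}
    (hij : i < j) (h : l[i]? = some x) (hq : q x = true) :
    ((l.take i).filter q).length < ((l.take j).filter q).length := by
  have h1 : (l.take (i+1)).filter q = (l.take i).filter q ++ [x] := by
    rw [List.take_succ, h, List.filter_append]
    simp [hq]
  have h2 : List.Sublist (l.take (i+1)) (l.take j) := by
    have : l.take (i+1) = (l.take j).take (i+1) := by
      rw [List.take_take, min_eq_left (by omega)]
    rw [this]; exact List.take_sublist _ _
  have h3 := (h2.filter q).length_le
  rw [h1] at h3; simp at h3; omega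

end Filter

section HBLemmas

variable {e : List (PQEvent O D P)}

theorem call_method_eq (he : IsExec e) {o : O} {m m' : PQOp D P} {i j : ℕ}
    (h : e[i]? = some (PQEvent.call o m)) (h' : e[j]? = some (PQEvent.call o m')) : m = m' := by
  have hij := he.1 i j o m m' h h'
  subst hij
  rw [h] at h'
  simpa using h'

theorem ret_method (he : IsExec e) {o : O} {m m' : PQOp D P} {i : ℕ}
    (hm : hasMethod e o m) (h : e[i]? = some (PQEvent.ret o m')) : m' = m := by
  obtain ⟨j, _, hcall⟩ := he.2.2.1 i o m' h
  obtain ⟨i0, h0⟩ := hm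
  exact call_method_eq he hcall h0

theorem hb_trans (he : IsExec e) {o1 o2 o3 : O} (h1 : hb e o1 o2) (h2 : hb e o2 o3) :
    hb e o1 o3 := by
  obtain ⟨i1, j1, m1, m2, hlt1, hr1, hc1⟩ := h1
  obtain ⟨i2, j2, m2', m3, hlt2, hr2, hc2⟩ := h2
  obtain ⟨j1', hj1', hc1'⟩ := he.2.2.1 i2 o2 m2' hr2
  have hj : j1' = j1 := he.1 j1' j1 o2 m2' m2 hc1' hc1
  exact ⟨i1, j2, m1, m3, by omega, hr1, hc2⟩

theorem ne_idx_call_ret {o o' : O} {m m' : PQOp D P} {i j : ℕ}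
    (h : e[i]? = some (PQEvent.ret o m)) (h' : e[j]? = some (PQEvent.call o' m')) : i ≠ j := by
  intro hij
  subst hij
  rw [h] at h'
  simp at h'

theorem hb_chain3 (he : IsExec e) {o1 o2 o3 o4 : O}
    (h12 : hb e o1 o2) (hn : ¬ hb e o3 o2) (h34 : hb e o3 o4) : hb e o1 o4 := by
  obtain ⟨i1, j1, m1, m2, hlt1, hr1, hc1⟩ := h12
  obtain ⟨i2, j2, m3, m4, hlt2, hr2, hc2⟩ := h34
  have hne : i2 ≠ j1 := ne_idx_call_ret hr2 hc1
  have hnlt : ¬ (i2 < j1) := fun hx => hn ⟨i2, j1, m3, m2, hx, hr2, hc1⟩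
  exact ⟨i1, j2, m1, m4, by omega, hr1, hc2⟩

end HBLemmas

section LinFacts

/-- every value of (the maximal) priority `p` is removed by at most one operation -/
def RmUnique (e : List (PQEvent O D P)) (p : P) : Prop :=
  ∀ (y : D) (o1 o2 : O), putOccurs e y p → hasMethod e o1 (PQOp.rm y) →
    hasMethod e o2 (PQOp.rm y) → o1 = o2

/-- the remove of a value cannot happen before its put -/
def NoRmBeforePut (e : List (PQEvent O D P)) (p : P) : Prop :=
  ∀ (y : D) (o1 o2 : O), putOccurs e y p → hasMethod e o1 (PQOp.rm y) →
    hasMethod e o2 (PQOp.put y p) → ¬ hb e o1 o2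

/-- values of the same priority are removed in FIFO order -/
def FifoProp (e : List (PQEvent O D P)) (p : P) : Prop :=
  ∀ (u v : D) (ou ov ru rv : O), putOccurs e u p → putOccurs e v p →
    hasMethod e ou (PQOp.put u p) → hasMethod e ov (PQOp.put v p) →
    hasMethod e ru (PQOp.rm u) → hasMethod e rv (PQOp.rm v) →
    hb e ou ov → hb e rv ru → False

theorem lin_facts {e : List (PQEvent O D P)} (he : IsExec e) (hd : ExecDiff e) {p : P}
    (hfifo : SinglePriLin e) : RmUnique e p ∧ NoRmBeforePut e p ∧ FifoProp e p := by
  obtain ⟨l, hSeqPQ, f, hlin⟩ := hfifo p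
  set proj := projVals (valsOfPri e p) e with hprojdef
  have hval_call : ∀ (o : O) (m : PQOp D P), (PQEvent.call o m).val = m.val := fun _ _ => rfl
  have hval_ret : ∀ (o : O) (m : PQOp D P), (PQEvent.ret o m).val = m.val := fun _ _ => rfl
  -- transfer of methods into the projection
  have hasMethod_proj : ∀ (o : O) (m : PQOp D P), hasMethod e o m → m.val ∈ valsOfPri e p →
      hasMethod proj o m := by
    rintro o m ⟨i, hi⟩ hv
    refine ⟨_, fil_idx _ e hi ?_⟩
    simp only [hval_call, decide_eq_true_eq]
    exact hv
  -- transfer of hb into the projection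
  have hb_proj : ∀ (o1 o2 : O) (m1 m2 : PQOp D P), hasMethod e o1 m1 → hasMethod e o2 m2 →
      m1.val ∈ valsOfPri e p → m2.val ∈ valsOfPri e p → hb e o1 o2 → hb proj o1 o2 := by
    rintro o1 o2 m1 m2 hm1 hm2 hv1 hv2 ⟨i, j, m1', m2', hij, hri, hcj⟩
    have e1 : m1' = m1 := ret_method he hm1 hri
    rw [e1] at hri
    obtain ⟨i0, h0⟩ := hm2
    have e2 : m2' = m2 := call_method_eq he hcj h0
    rw [e2] at hcj
    have hd1 : (decide ((PQEvent.ret o1 m1).val ∈ valsOfPri e p)) = true := by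
      simp only [hval_ret, decide_eq_true_eq]; exact hv1
    have hd2 : (decide ((PQEvent.call o2 m2).val ∈ valsOfPri e p)) = true := by
      simp only [hval_call, decide_eq_true_eq]; exact hv2
    exact ⟨_, _, m1, m2, fil_idx_mono _ e hij hri hd1, fil_idx _ e hri hd1, fil_idx _ e hcj hd2⟩
  have hmeth_e_of_proj : ∀ (o : O) (m : PQOp D P), hasMethod proj o m → hasMethod e o m := by
    rintro o m ⟨i, hi⟩
    have hmem : PQEvent.call o m ∈ proj := List.mem_of_getElem? hi
    have hmem' : PQEvent.call o m ∈ e := (List.mem_filter.mp hmem).1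
    obtain ⟨k, hk, hke⟩ := List.mem_iff_getElem.mp hmem'
    exact ⟨k, by rw [List.getElem?_eq_getElem hk, hke]⟩
  -- reading off the operation at a position of l
  have hofpos : ∀ (k : ℕ) (m : PQOp D P), l[k]? = some m →
      ∃ o, hasMethod e o m ∧ hasMethod proj o m ∧ o ∈ opsOf proj ∧ f o = k := by
    intro k m hk
    have hklt : k < l.length := (List.getElem?_eq_some_iff.mp hk).1
    obtain ⟨o, ho, hfo⟩ := hlin.1.2.2 hklt
    obtain ⟨i0, m0, hi0⟩ := ho
    have hm0 : hasMethod proj o m0 := ⟨i0, hi0⟩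
    have hl0 : l[f o]? = some m0 := hlin.2.1 o m0 hm0
    rw [hfo, hk] at hl0
    have hmm : m = m0 := by simpa using hl0
    subst hmm
    exact ⟨o, hmeth_e_of_proj o m hm0, hm0, ⟨i0, m, hi0⟩, hfo⟩
  -- each value is put at most once in l
  have honce_l : ∀ (i j : ℕ) (a : D) (q q' : P), l[i]? = some (PQOp.put a q) →
      l[j]? = some (PQOp.put a q') → i = j := by
    intro i j a q q' hi hj
    obtain ⟨o, hoe, _, _, hfo⟩ := hofpos i _ hi
    obtain ⟨o', hoe', _, _, hfo'⟩ := hofpos j _ hj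
    obtain ⟨i0, h0⟩ := hoe
    obtain ⟨j0, h0'⟩ := hoe'
    have hidx : i0 = j0 := hd i0 j0 o o' a q q' h0 h0'
    subst hidx
    rw [h0] at h0'
    have hoq : o = o' ∧ q = q' := by simpa using h0'
    obtain ⟨rfl, -⟩ := hoq
    rw [← hfo, ← hfo']
  -- all puts in l have priority p
  have hallp_l : ∀ (a : D) (pr : P), PQOp.put a pr ∈ l → pr = p := by
    intro a pr hmem
    obtain ⟨k, hklt, hkeq⟩ := List.mem_iff_getElem.mp hmem
    obtain ⟨o, hoe, hop, _, _⟩ := hofpos k _ (by rw [List.getElem?_eq_getElem hklt, hkeq])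
    obtain ⟨i0, h0⟩ := hop
    have hmem2 : PQEvent.call o (PQOp.put a pr) ∈ proj := List.mem_of_getElem? h0
    have hdec := (List.mem_filter.mp hmem2).2
    have hv : a ∈ valsOfPri e p := by
      simpa only [hval_call, decide_eq_true_eq, PQOp.val] using hdec
    obtain ⟨o2, i2, h2⟩ := hv
    obtain ⟨i1, h1⟩ := hoe
    have hidx : i1 = i2 := hd i1 i2 o o2 a pr p h1 h2
    subst hidx
    rw [h1] at h2
    have hoq : o = o2 ∧ pr = p := by simpa using h2
    exact hoq.2
  refine ⟨?_, ?_, ?_⟩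
  · -- RmUnique
    intro y o1 o2 hy h1 h2
    have hyv : (PQOp.rm y : PQOp D P).val ∈ valsOfPri e p := hy
    have hp1 := hasMethod_proj o1 _ h1 hyv
    have hp2 := hasMethod_proj o2 _ h2 hyv
    have hl1 : l[f o1]? = some (PQOp.rm y) := hlin.2.1 _ _ hp1
    have hl2 : l[f o2]? = some (PQOp.rm y) := hlin.2.1 _ _ hp2
    have hfeq : f o1 = f o2 := rm_unique hSeqPQ hallp_l honce_l hl1 hl2
    obtain ⟨i1, hi1⟩ := hp1
    obtain ⟨i2, hi2⟩ := hp2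
    exact hlin.1.2.1 ⟨i1, _, hi1⟩ ⟨i2, _, hi2⟩ hfeq
  · -- NoRmBeforePut
    intro y o1 o2 hy h1 h2 hhb
    have hyv1 : (PQOp.rm y : PQOp D P).val ∈ valsOfPri e p := hy
    have hyv2 : (PQOp.put y p).val ∈ valsOfPri e p := hy
    have htr := hb_proj o1 o2 _ _ h1 h2 hyv1 hyv2 hhb
    have hflt : f o1 < f o2 := hlin.2.2 o1 o2 htr
    have hl1 : l[f o1]? = some (PQOp.rm y) := hlin.2.1 _ _ (hasMethod_proj o1 _ h1 hyv1)
    have hl2 : l[f o2]? = some (PQOp.put y p) := hlin.2.1 _ _ (hasMethod_proj o2 _ h2 hyv2)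
    obtain ⟨i, q, hilt, hi⟩ := rm_has_put hSeqPQ hallp_l hl1
    have : i = f o2 := honce_l i (f o2) y q p hi hl2
    omega
  · -- FifoProp
    intro u v ou ov ru rv hu hv hmu hmv hmru hmrv hb1 hb2
    have huv1 : (PQOp.put u p).val ∈ valsOfPri e p := hu
    have huv2 : (PQOp.put v p).val ∈ valsOfPri e p := hv
    have huv3 : (PQOp.rm u : PQOp D P).val ∈ valsOfPri e p := hu
    have huv4 : (PQOp.rm v : PQOp D P).val ∈ valsOfPri e p := hv
    have ht1 := hb_proj ou ov _ _ hmu hmv huv1 huv2 hb1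
    have ht2 := hb_proj rv ru _ _ hmrv hmru huv4 huv3 hb2
    have hf1 : f ou < f ov := hlin.2.2 _ _ ht1
    have hf2 : f rv < f ru := hlin.2.2 _ _ ht2
    have hl1 : l[f ou]? = some (PQOp.put u p) := hlin.2.1 _ _ (hasMethod_proj ou _ hmu huv1)
    have hl2 : l[f ov]? = some (PQOp.put v p) := hlin.2.1 _ _ (hasMethod_proj ov _ hmv huv2)
    have hl3 : l[f ru]? = some (PQOp.rm u) := hlin.2.1 _ _ (hasMethod_proj ru _ hmru huv3)
    have hl4 : l[f rv]? = some (PQOp.rm v) := hlin.2.1 _ _ (hasMethod_proj rv _ hmrv huv4)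
    exact fifo_seq hSeqPQ hallp_l honce_l hl1 hl2 hl3 hl4 hf1 hf2

end LinFacts

section PBLayer

variable {e : List (PQEvent O D P)} {p : P}

theorem isPutOf_pin (hd : ExecDiff e) {z : D} {o : O} (hz : putOccurs e z p)
    (h : isPutOf e o z) : hasMethod e o (PQOp.put z p) := by
  obtain ⟨q, i, hi⟩ := h
  obtain ⟨o0, i0, h0⟩ := hz
  have hidx : i = i0 := hd i i0 o o0 z q p hi h0
  subst hidx
  rw [hi] at h0
  have hqq : o = o0 ∧ q = p := by simpa using h0
  exact ⟨i, hqq.2 ▸ hi⟩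

theorem isPutOf_unique (hd : ExecDiff e) {z : D} {o o' : O}
    (h : isPutOf e o z) (h' : isPutOf e o' z) : o = o' := by
  obtain ⟨q, i, hi⟩ := h
  obtain ⟨q', i', hi'⟩ := h'
  have hidx : i = i' := hd i i' o o' z q q' hi hi'
  subst hidx
  rw [hi] at hi'
  have hqq : o = o' ∧ q = q' := by simpa using hi'
  exact hqq.1

theorem pb_step (he : IsExec e) (hd : ExecDiff e)
    (hRU : RmUnique e p) (hNR : NoRmBeforePut e p)
    {x y w : D} (hy : putOccurs e y p)
    (h1 : pbA e x y ∨ pbB e x y ∨ pbC e x y) (h2 : pb e y w) :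
    pbA e x w ∨ pbB e x w ∨ pbC e x w ∨ (pbA e x y ∧ pbB e y w) ∨ (pbB e x y ∧ pbA e y w) := by
  rcases h2 with hA2 | hB2 | hC2
  · obtain ⟨oy, ow, hpy, hpw, hb2⟩ := hA2
    rcases h1 with h1 | h1 | h1
    · obtain ⟨ox, oy', hpx, hpy', hb1⟩ := h1
      have hoo : oy' = oy := isPutOf_unique hd hpy' hpy
      subst hoo
      exact Or.inl ⟨ox, ow, hpx, hpw, hb_trans he hb1 hb2⟩
    · exact Or.inr (Or.inr (Or.inr (Or.inr ⟨h1, ⟨oy, ow, hpy, hpw, hb2⟩⟩)))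
    · obtain ⟨rx, oy', hrx, hpy', hb1⟩ := h1
      have hoo : oy' = oy := isPutOf_unique hd hpy' hpy
      subst hoo
      exact Or.inr (Or.inr (Or.inl ⟨rx, ow, hrx, hpw, hb_trans he hb1 hb2⟩))
  · obtain ⟨ry, rw, hry, hrw, hb2⟩ := hB2
    rcases h1 with h1 | h1 | h1
    · exact Or.inr (Or.inr (Or.inr (Or.inl ⟨h1, ⟨ry, rw, hry, hrw, hb2⟩⟩)))
    · obtain ⟨rx, ry', hrx, hry', hb1⟩ := h1
      have hoo : ry' = ry := hRU y ry' ry hy hry' hry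
      subst hoo
      exact Or.inr (Or.inl ⟨rx, rw, hrx, hrw, hb_trans he hb1 hb2⟩)
    · obtain ⟨rx, oy, hrx, hpy, hb1⟩ := h1
      have hnm : ¬ hb e ry oy := hNR y ry oy hy hry (isPutOf_pin hd hy hpy)
      exact Or.inr (Or.inl ⟨rx, rw, hrx, hrw, hb_chain3 he hb1 hnm hb2⟩)
  · obtain ⟨ry, ow, hry, hpw, hb2⟩ := hC2
    rcases h1 with h1 | h1 | h1
    · obtain ⟨ox, oy, hpx, hpy, hb1⟩ := h1
      have hnm : ¬ hb e ry oy := hNR y ry oy hy hry (isPutOf_pin hd hy hpy)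
      exact Or.inl ⟨ox, ow, hpx, hpw, hb_chain3 he hb1 hnm hb2⟩
    · obtain ⟨rx, ry', hrx, hry', hb1⟩ := h1
      have hoo : ry' = ry := hRU y ry' ry hy hry' hry
      subst hoo
      exact Or.inr (Or.inr (Or.inl ⟨rx, ow, hrx, hpw, hb_trans he hb1 hb2⟩))
    · obtain ⟨rx, oy, hrx, hpy, hb1⟩ := h1
      have hnm : ¬ hb e ry oy := hNR y ry oy hy hry (isPutOf_pin hd hy hpy)
      exact Or.inr (Or.inr (Or.inl ⟨rx, ow, hrx, hpw, hb_chain3 he hb1 hnm hb2⟩))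

theorem pb_step4 (he : IsExec e) (hd : ExecDiff e)
    (hRU : RmUnique e p) (hNR : NoRmBeforePut e p) (hF : FifoProp e p)
    {x u y w : D} (hu : putOccurs e u p) (hy : putOccurs e y p)
    (hA : pbA e x u) (hB : pbB e u y) (h2 : pb e y w) :
    pbA e x w ∨ (pbA e x u ∧ pbB e u w) := by
  obtain ⟨ox, ou, hpx, hpu, hbxu⟩ := hA
  obtain ⟨ru, ry, hru, hry, hbuy⟩ := hB
  rcases h2 with h | h | h
  · obtain ⟨oy, ow, hpy, hpw, hbyw⟩ := h
    have hnm : ¬ hb e oy ou := by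
      intro hbad
      exact hF y u oy ou ry ru hy hu (isPutOf_pin hd hy hpy) (isPutOf_pin hd hu hpu)
        hry hru hbad hbuy
    exact Or.inl ⟨ox, ow, hpx, hpw, hb_chain3 he hbxu hnm hbyw⟩
  · obtain ⟨ry', rw, hry', hrw, hbyw⟩ := h
    have hoo : ry' = ry := hRU y ry' ry hy hry' hry
    subst hoo
    exact Or.inr ⟨⟨ox, ou, hpx, hpu, hbxu⟩, ⟨ru, rw, hru, hrw, hb_trans he hbuy hbyw⟩⟩
  · obtain ⟨ry', ow, hry', hpw, hbyw⟩ := h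
    have hoo : ry' = ry := hRU y ry' ry hy hry' hry
    subst hoo
    have hruw : hb e ru ow := hb_trans he hbuy hbyw
    have hnm : ¬ hb e ru ou := hNR u ru ou hu hru (isPutOf_pin hd hu hpu)
    exact Or.inl ⟨ox, ow, hpx, hpw, hb_chain3 he hbxu hnm hruw⟩

theorem pb_step5 (he : IsExec e) (hd : ExecDiff e)
    (hRU : RmUnique e p) (hNR : NoRmBeforePut e p) (hF : FifoProp e p)
    {x u y w : D} (hu : putOccurs e u p) (hy : putOccurs e y p)
    (hB : pbB e x u) (hA : pbA e u y) (h2 : pb e y w) :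
    pbB e x w ∨ (pbB e x u ∧ pbA e u w) := by
  obtain ⟨rx, ru, hrx, hru, hbxu⟩ := hB
  obtain ⟨ou, oy, hpu, hpy, hbuy⟩ := hA
  rcases h2 with h | h | h
  · obtain ⟨oy', ow, hpy', hpw, hbyw⟩ := h
    have hoo : oy' = oy := isPutOf_unique hd hpy' hpy
    subst hoo
    exact Or.inr ⟨⟨rx, ru, hrx, hru, hbxu⟩, ⟨ou, ow, hpu, hpw, hb_trans he hbuy hbyw⟩⟩
  · obtain ⟨ry, rw, hry, hrw, hbyw⟩ := h
    have hnm : ¬ hb e ry ru := by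
      intro hbad
      exact hF u y ou oy ru ry hu hy (isPutOf_pin hd hu hpu) (isPutOf_pin hd hy hpy)
        hru hry hbuy hbad
    exact Or.inl ⟨rx, rw, hrx, hrw, hb_chain3 he hbxu hnm hbyw⟩
  · obtain ⟨ry, ow, hry, hpw, hbyw⟩ := h
    have hnm : ¬ hb e ry oy := hNR y ry oy hy hry (isPutOf_pin hd hy hpy)
    exact Or.inr ⟨⟨rx, ru, hrx, hru, hbxu⟩, ⟨ou, ow, hpu, hpw, hb_chain3 he hbuy hnm hbyw⟩⟩

theorem chain_main (he : IsExec e) (hd : ExecDiff e)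
    (hRU : RmUnique e p) (hNR : NoRmBeforePut e p) (hF : FifoProp e p) :
    ∀ (c : List D) (a b : D), (∀ z ∈ a :: b :: c, putOccurs e z p) →
    List.Chain (pb e) a (c ++ [b]) →
    pbA e a b ∨ pbB e a b ∨ pbC e a b ∨
      ∃ ai ∈ c, (pbA e a ai ∧ pbB e ai b) ∨ (pbB e a ai ∧ pbA e ai b) := by
  intro c
  induction c using List.reverseRecOn with
  | nil =>
    intro a b hpri hch
    simp only [List.nil_append, List.chain_cons] at hch
    rcases List.isChain_pair.mp hch with h | h | h
    exacts [Or.inl h, Or.inr (Or.inl h), Or.inr (Or.inr (Or.inl h))]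
  | append_singleton c y ih =>
    intro a b hpri hch
    have hch' : List.Chain (pb e) a (c ++ y :: [b]) := by
      simpa [List.append_assoc] using hch
    obtain ⟨hch1, hch2⟩ := List.isChain_cons_split.mp hch'
    have hpb : pb e y b := by
      exact List.isChain_pair.mp hch2
    have hyp : putOccurs e y p := hpri y (by simp)
    have hpri' : ∀ z ∈ a :: y :: c, putOccurs e z p := by
      intro z hz
      apply hpri
      simp only [List.mem_cons, List.mem_append, List.mem_singleton] at hz ⊢
      tauto
    rcases ih a y hpri' hch1 with h | h | h | ⟨u, hu, hcase⟩
    · rcases pb_step he hd hRU hNR hyp (Or.inl h) hpb with h' | h' | h' | h' | h'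
      · exact Or.inl h'
      · exact Or.inr (Or.inl h')
      · exact Or.inr (Or.inr (Or.inl h'))
      · exact Or.inr (Or.inr (Or.inr ⟨y, by simp, Or.inl h'⟩))
      · exact Or.inr (Or.inr (Or.inr ⟨y, by simp, Or.inr h'⟩))
    · rcases pb_step he hd hRU hNR hyp (Or.inr (Or.inl h)) hpb with h' | h' | h' | h' | h'
      · exact Or.inl h'
      · exact Or.inr (Or.inl h')
      · exact Or.inr (Or.inr (Or.inl h'))
      · exact Or.inr (Or.inr (Or.inr ⟨y, by simp, Or.inl h'⟩))
      · exact Or.inr (Or.inr (Or.inr ⟨y, by simp, Or.inr h'⟩))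
    · rcases pb_step he hd hRU hNR hyp (Or.inr (Or.inr h)) hpb with h' | h' | h' | h' | h'
      · exact Or.inl h'
      · exact Or.inr (Or.inl h')
      · exact Or.inr (Or.inr (Or.inl h'))
      · exact Or.inr (Or.inr (Or.inr ⟨y, by simp, Or.inl h'⟩))
      · exact Or.inr (Or.inr (Or.inr ⟨y, by simp, Or.inr h'⟩))
    · have hup : putOccurs e u p := hpri' u (by simp [hu])
      rcases hcase with ⟨hA, hB⟩ | ⟨hB, hA⟩
      · rcases pb_step4 he hd hRU hNR hF hup hyp hA hB hpb with h' | h'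
        · exact Or.inl h'
        · exact Or.inr (Or.inr (Or.inr ⟨u, by simp [hu], Or.inl h'⟩))
      · rcases pb_step5 he hd hRU hNR hF hup hyp hB hA hpb with h' | h'
        · exact Or.inr (Or.inl h')
        · exact Or.inr (Or.inr (Or.inr ⟨u, by simp [hu], Or.inr h'⟩))

end PBLayer

end PBAux

/-- a `<pb`-chain `a <pb a1 <pb ... <pb am <pb b` of values of the maximal
priority `p` can be shortened to one of five bounded shapes. -/
theorem pb_chain_bounded_length
    {D : Type u} {P : Type v} {O : Type w} [PartialOrder P]
    (e : List (PQEvent O D P)) (he : IsExec e) (hd : ExecDiff e)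
    (p : P) (hp : UniqueMaxPriorityE e p) (hfifo : SinglePriLin e)
    (a b : D) (c : List D)
    (hpri : ∀ z ∈ a :: b :: c, putOccurs e z p)
    (hchain : List.Chain (pb e) a (c ++ [b])) :
    pbA e a b ∨ pbB e a b ∨ pbC e a b ∨
      ∃ ai ∈ c, (pbA e a ai ∧ pbB e ai b) ∨ (pbB e a ai ∧ pbA e ai b) := by
  obtain ⟨hRU, hNR, hF⟩ := PBAux.lin_facts (p := p) he hd hfifo
  exact PBAux.chain_main he hd hRU hNR hF c a b hpri hchain
end

section
/- Let e be an execution whose set of operations is partitioned into S1 and S2, and let l1 and l2 be sequential executions such that e|S1 ⊑ l1 and e|S2 ⊑ l2, where e|Si is the projection of e to the actions of operations in Si. Then there exists a sequential execution l such that e ⊑ l, the projection of l to the operations of S1 equals l1, and the projection of l to the operations of S2 equals l2. -/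
open Classical

universe u v w

namespace PQMergeAux

universe x

lemma enc_lt {N a b X y : ℕ} (hx : X < N) (h : a < b ∨ (a = b ∧ X < y)) :
    a * N + X < b * N + y := by
  rcases h with h | ⟨rfl, h⟩
  · calc a * N + X < a * N + N := by omega
    _ = (a + 1) * N := by ring
    _ ≤ b * N := Nat.mul_le_mul_right N h
    _ ≤ b * N + y := Nat.le_add_right _ _
  · omega

lemma enc_inj {N a b X y : ℕ} (hx : X < N) (hy : y < N) (h : a * N + X = b * N + y) :
    a = b ∧ X = y := by
  rcases lt_trichotomy a b with hab | rfl | hab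
  · exact absurd h (Nat.ne_of_lt (enc_lt hx (Or.inl hab)))
  · omega
  · exact absurd h.symm (Nat.ne_of_lt (enc_lt hy (Or.inl hab)))

variable {α : Type x}

lemma getElem?_append_cons (u : List α) (a : α) (v : List α) :
    (u ++ a :: v)[u.length]? = some a := by
  rw [List.getElem?_append_right le_rfl]; simp

lemma split1 {e : List α} {i : ℕ} {a : α} (h : e[i]? = some a) :
    ∃ u v, e = u ++ a :: v ∧ u.length = i := by
  obtain ⟨hi, hx⟩ := List.getElem?_eq_some_iff.mp h
  refine ⟨e.take i, e.drop (i + 1), ?_, ?_⟩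
  · rw [← hx, ← List.drop_eq_getElem_cons hi, List.take_append_drop]
  · rw [List.length_take]; omega

lemma split2 {e : List α} {i j : ℕ} {a b : α} (hij : i < j)
    (ha : e[i]? = some a) (hb : e[j]? = some b) :
    ∃ u v w, e = u ++ a :: (v ++ b :: w) := by
  obtain ⟨u, v, rfl, hu⟩ := split1 ha
  have hv : v[j - i - 1]? = some b := by
    rw [List.getElem?_append_right (by omega)] at hb
    rw [List.getElem?_cons] at hb
    simp only [hu] at hb
    rw [if_neg (by omega)] at hb
    exact hb
  obtain ⟨v1, v2, rfl, -⟩ := split1 hv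
  exact ⟨u, v1, v2, rfl⟩

lemma strictMono_fin_id {n : ℕ} (g : Fin n → Fin n) (h : StrictMono g) (i : Fin n) : g i = i := by
  haveI := Finite.to_wellFoundedLT (α := Fin n)
  have hbij : Function.Bijective g := Finite.injective_iff_bijective.mp h.injective
  let φ : Fin n ≃o Fin n := StrictMono.orderIsoOfSurjective g h hbij.2
  have h1 : i ≤ g i := StrictMono.le_apply h
  have h3 : i ≤ φ.symm i := StrictMono.le_apply φ.symm.strictMono
  have h2 : g i ≤ i := by
    have := φ.monotone h3
    simpa [φ] using this
  exact le_antisymm h2 h1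

end PQMergeAux
namespace PQMergeAux

open Classical

variable {D : Type u} {P : Type v} {O : Type w}

lemma hasMethod_iff_mem {e : List (PQEvent O D P)} {o : O} {m : PQOp D P} :
    hasMethod e o m ↔ PQEvent.call o m ∈ e := by
  rw [hasMethod, List.mem_iff_getElem?]

lemma mem_opsOf {e : List (PQEvent O D P)} {o : O} :
    o ∈ opsOf e ↔ ∃ m, PQEvent.call o m ∈ e := by
  simp only [opsOf, Set.mem_setOf_eq, List.mem_iff_getElem?]
  exact exists_comm

lemma opsOf_projIds {S : Set O} {e : List (PQEvent O D P)} :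
    opsOf (projIds S e) = S ∩ opsOf e := by
  ext o
  simp only [mem_opsOf, projIds, List.mem_filter, Set.mem_inter_iff]
  constructor
  · rintro ⟨m, hm, hd⟩
    simp only [PQEvent.ident, decide_eq_true_eq] at hd
    exact ⟨of_decide_eq_true hd, m, hm⟩
  · rintro ⟨hS, m, hm⟩
    exact ⟨m, hm, by simp [PQEvent.ident, hS]⟩

lemma hb_projIds {e : List (PQEvent O D P)} {o1 o2 : O} {S : Set O}
    (h1 : o1 ∈ S) (h2 : o2 ∈ S) (h : hb e o1 o2) : hb (projIds S e) o1 o2 := by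
  obtain ⟨i, j, m1, m2, hij, hr, hc⟩ := h
  obtain ⟨u, v, w, rfl⟩ := split2 hij hr hc
  have key : projIds S (u ++ PQEvent.ret o1 m1 :: (v ++ PQEvent.call o2 m2 :: w)) =
      projIds S u ++ PQEvent.ret o1 m1 :: (projIds S v ++ PQEvent.call o2 m2 :: projIds S w) := by
    simp [projIds, List.filter_append, PQEvent.ident, h1, h2]
  rw [key]
  refine ⟨(projIds S u).length, (projIds S u).length + 1 + (projIds S v).length,
    m1, m2, by omega, ?_, ?_⟩
  · exact getElem?_append_cons _ _ _
  · rw [List.getElem?_append_right (by omega)]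
    have h3 : (projIds S u).length + 1 + (projIds S v).length - (projIds S u).length
        = (projIds S v).length + 1 := by omega
    rw [h3, List.getElem?_cons, if_neg (by omega)]
    have h4 : (projIds S v).length + 1 - 1 = (projIds S v).length := by omega
    rw [h4]
    exact getElem?_append_cons _ _ _

end PQMergeAux
open PQMergeAux in
/-- linearizations of the two parts of a partition of the operations of `e`
can be merged into a linearization of `e` projecting back onto them. -/
theorem merge_linearizations
    {D : Type u} {P : Type v} {O : Type w}
    (e : List (PQEvent O D P)) (he : IsExec e)
    (S1 S2 : Set O) (hcover : S1 ∪ S2 = opsOf e) (hdisj : Disjoint S1 S2)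
    (l1 l2 : List (PQOp D P))
    (h1 : LinTo (projIds S1 e) l1) (h2 : LinTo (projIds S2 e) l2) :
    ∃ (l : List (PQOp D P)) (f : O → ℕ), IsLin e l f ∧
      seqProjIdx l (f '' S1) = l1 ∧ seqProjIdx l (f '' S2) = l2 := by
  classical
  obtain ⟨f1, hf1⟩ := h1
  obtain ⟨f2, hf2⟩ := h2
  have hS1sub : S1 ⊆ opsOf e := hcover ▸ Set.subset_union_left
  have hS2sub : S2 ⊆ opsOf e := hcover ▸ Set.subset_union_right
  have hmem12 : ∀ o ∈ opsOf e, o ∈ S1 ∨ o ∈ S2 := by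
    intro o ho; rw [← hcover] at ho; exact ho
  have hops1 : opsOf (projIds S1 e) = S1 := by
    rw [opsOf_projIds]; exact Set.inter_eq_left.mpr hS1sub
  have hops2 : opsOf (projIds S2 e) = S2 := by
    rw [opsOf_projIds]; exact Set.inter_eq_left.mpr hS2sub
  -- generic facts about a side
  have side_hb : ∀ (S : Set O) (fS : O → ℕ) (lS : List (PQOp D P)),
      IsLin (projIds S e) lS fS → ∀ o p, o ∈ S → p ∈ S → hb e o p → fS o < fS p := by
    intro S fS lS hL o p ho hp hhb
    exact hL.2.2 o p (hb_projIds ho hp hhb)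
  -- degenerate case
  by_cases hemp : opsOf e = ∅
  · have hS1e : S1 = ∅ := Set.eq_empty_of_subset_empty (hemp ▸ hS1sub)
    have hS2e : S2 = ∅ := Set.eq_empty_of_subset_empty (hemp ▸ hS2sub)
    have hl1 : l1 = [] := by
      have := hf1.1.2.2
      rw [hops1, hS1e] at this
      have h0 : {i | i < l1.length} = (∅ : Set ℕ) :=
        Set.eq_empty_of_subset_empty (by simpa [Set.SurjOn] using this)
      rcases l1 with _ | ⟨a, l⟩
      · rfl
      · exact absurd (Set.eq_empty_iff_forall_notMem.mp h0 0) (by simp)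
    have hl2 : l2 = [] := by
      have := hf2.1.2.2
      rw [hops2, hS2e] at this
      have h0 : {i | i < l2.length} = (∅ : Set ℕ) :=
        Set.eq_empty_of_subset_empty (by simpa [Set.SurjOn] using this)
      rcases l2 with _ | ⟨a, l⟩
      · rfl
      · exact absurd (Set.eq_empty_iff_forall_notMem.mp h0 0) (by simp)
    refine ⟨[], fun _ => 0, ⟨?_, ?_, ?_⟩, by simp [seqProjIdx, hl1], by simp [seqProjIdx, hl2]⟩
    · rw [hemp]
      simp only [List.length_nil]
      exact ⟨fun o ho => absurd ho (by simp), fun o ho => absurd ho (by simp),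
        fun i hi => by simp at hi⟩
    · intro o m hm
      obtain ⟨i, hi⟩ := hm
      have hoo : o ∈ opsOf e := ⟨i, m, hi⟩
      rw [hemp] at hoo
      exact absurd hoo (Set.notMem_empty o)
    · intro o1 o2 hhb
      obtain ⟨i, j, m1, m2, hij, hri, hcj⟩ := hhb
      have hoo : o2 ∈ opsOf e := ⟨j, m2, hcj⟩
      rw [hemp] at hoo
      exact absurd hoo (Set.notMem_empty o2)
  -- main case
  obtain ⟨o0, ho0⟩ := Set.nonempty_iff_ne_empty.mpr hemp
  obtain ⟨i0, m0, hm0⟩ := ho0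
  haveI : Inhabited O := ⟨o0⟩
  haveI : Inhabited (PQOp D P) := ⟨m0⟩
  -- method of each operation
  have hex : ∀ o ∈ opsOf e, ∃ m : PQOp D P, hasMethod e o m := by
    rintro o ⟨i, m, hi⟩; exact ⟨m, i, hi⟩
  choose! mth hmth using hex
  have hexc : ∀ o ∈ opsOf e, ∃ i, e[i]? = some (PQEvent.call o (mth o)) := fun o ho => hmth o ho
  choose! c hc using hexc
  have hcall_uniq : ∀ o i m, o ∈ opsOf e → e[i]? = some (PQEvent.call o m) →
      i = c o ∧ m = mth o := by
    intro o i m ho hi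
    have hcu := he.1 i (c o) o m (mth o) hi (hc o ho)
    refine ⟨hcu, ?_⟩
    rw [hcu] at hi
    rw [hc o ho] at hi
    injection hi with h
    injection h with h1 h2
    exact h2.symm
  have hexr : ∀ o ∈ opsOf e, ∃ j, c o < j ∧ e[j]? = some (PQEvent.ret o (mth o)) :=
    fun o ho => he.2.2.2 (c o) o (mth o) (hc o ho)
  choose! r hcr hrr using hexr
  have hret_uniq : ∀ o j m, o ∈ opsOf e → e[j]? = some (PQEvent.ret o m) → j = r o := by
    intro o j m ho hj
    exact he.2.1 j (r o) o m (mth o) hj (hrr o ho)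
  -- hb characterization
  have hb_iff : ∀ o1 o2, hb e o1 o2 ↔ (o1 ∈ opsOf e ∧ o2 ∈ opsOf e ∧ r o1 < c o2) := by
    intro o1 o2
    constructor
    · rintro ⟨i, j, m1, m2, hij, hri, hcj⟩
      have ho1 : o1 ∈ opsOf e := by
        obtain ⟨i', hi', hci'⟩ := he.2.2.1 i o1 m1 hri
        exact ⟨i', m1, hci'⟩
      have ho2 : o2 ∈ opsOf e := ⟨j, m2, hcj⟩
      have hi := hret_uniq o1 i m1 ho1 hri
      have hj := (hcall_uniq o2 j m2 ho2 hcj).1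
      exact ⟨ho1, ho2, by omega⟩
    · rintro ⟨ho1, ho2, h3⟩
      exact ⟨r o1, c o2, mth o1, mth o2, h3, hrr o1 ho1, hc o2 ho2⟩
  -- finiteness
  have hcinj : Set.InjOn c (opsOf e) := by
    intro o ho o' ho' hco
    have h1 := hc o ho
    have h2 := hc o' ho'
    rw [hco, h2] at h1
    injection h1 with h
    injection h with h1' h2'
    exact h1'.symm
  have hfin : (opsOf e).Finite := by
    apply Set.Finite.of_finite_image _ hcinj
    apply Set.Finite.subset (Set.finite_Iio e.length)
    rintro i ⟨o, ho, rfl⟩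
    exact (List.getElem?_eq_some_iff.mp (hc o ho)).1
  set Ω : Finset O := hfin.toFinset with hΩdef
  have hΩ : ∀ o, o ∈ Ω ↔ o ∈ opsOf e := fun o => hfin.mem_toFinset
  -- more generic facts about a side
  have side_meth : ∀ (S : Set O) (fS : O → ℕ) (lS : List (PQOp D P)),
      IsLin (projIds S e) lS fS → ∀ o, o ∈ S → o ∈ opsOf e → lS[fS o]? = some (mth o) := by
    intro S fS lS hL o hoS ho
    apply hL.2.1
    rw [hasMethod_iff_mem, projIds, List.mem_filter]
    exact ⟨hasMethod_iff_mem.mp (hmth o ho), by simp [PQEvent.ident, hoS]⟩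
  have side_lt : ∀ (S : Set O) (fS : O → ℕ) (lS : List (PQOp D P)),
      IsLin (projIds S e) lS fS → S ⊆ opsOf e → ∀ o ∈ S, fS o < lS.length := by
    intro S fS lS hL hsub o ho
    have h := hL.1.1
    rw [opsOf_projIds, Set.inter_eq_left.mpr hsub] at h
    exact h ho
  have side_inj : ∀ (S : Set O) (fS : O → ℕ) (lS : List (PQOp D P)),
      IsLin (projIds S e) lS fS → S ⊆ opsOf e → Set.InjOn fS S := by
    intro S fS lS hL hsub
    have h := hL.1.2.1
    rwa [opsOf_projIds, Set.inter_eq_left.mpr hsub] at h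
  have side_surj : ∀ (S : Set O) (fS : O → ℕ) (lS : List (PQOp D P)),
      IsLin (projIds S e) lS fS → S ⊆ opsOf e →
      ∀ j, j < lS.length → ∃ o ∈ S, fS o = j := by
    intro S fS lS hL hsub j hj
    have h := hL.1.2.2
    rw [opsOf_projIds, Set.inter_eq_left.mpr hsub] at h
    obtain ⟨o, ho, hfo⟩ := h hj
    exact ⟨o, ho, hfo⟩
  -- positions, sides and keys
  set N : ℕ := l1.length + l2.length + 1 with hNdef
  set pos : O → ℕ := fun o => if o ∈ S1 then f1 o else f2 o with hposdef
  set sd : O → ℕ := fun o => if o ∈ S1 then 0 else 1 with hsddef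
  set κ : O → ℕ := fun o => (Ω.filter (fun p => sd p = sd o ∧ pos p ≤ pos o)).sup c with hκdef
  set key : O → ℕ := fun o => (κ o * 2 + sd o) * N + pos o with hkeydef
  have hsd1 : ∀ o, sd o ≤ 1 := by
    intro o; simp only [hsddef]; split <;> omega
  have hpos1 : ∀ o ∈ S1, pos o = f1 o := by
    intro o ho; simp only [hposdef]; rw [if_pos ho]
  have hpos2 : ∀ o ∈ S2, pos o = f2 o := by
    intro o ho; simp only [hposdef]
    rw [if_neg (fun h1 => Set.disjoint_left.mp hdisj h1 ho)]
  have hsdS1 : ∀ o ∈ opsOf e, (o ∈ S1 ↔ sd o = 0) := by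
    intro o ho
    simp only [hsddef]
    constructor
    · intro h; rw [if_pos h]
    · intro h
      by_contra hn
      rw [if_neg hn] at h
      omega
  have hsdS2 : ∀ o ∈ opsOf e, (o ∈ S2 ↔ sd o = 1) := by
    intro o ho
    simp only [hsddef]
    constructor
    · intro h; rw [if_neg (fun h1 => Set.disjoint_left.mp hdisj h1 h)]
    · intro h
      by_cases h1 : o ∈ S1
      · rw [if_pos h1] at h; omega
      · rcases hmem12 o ho with h' | h'
        · exact absurd h' h1
        · exact h'
  have hposlt : ∀ o ∈ opsOf e, pos o < N := by
    intro o ho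
    rcases hmem12 o ho with h | h
    · rw [hpos1 o h, hNdef]
      have := side_lt S1 f1 l1 hf1 hS1sub o h
      omega
    · rw [hpos2 o h, hNdef]
      have := side_lt S2 f2 l2 hf2 hS2sub o h
      omega
  have hsame : ∀ o p, o ∈ opsOf e → p ∈ opsOf e → sd o = sd p → pos o = pos p → o = p := by
    intro o p ho hp hsd hpos
    rcases hmem12 o ho with h | h
    · have hp1 : p ∈ S1 := (hsdS1 p hp).mpr (hsd ▸ (hsdS1 o ho).mp h)
      exact side_inj S1 f1 l1 hf1 hS1sub h hp1 (by rw [← hpos1 o h, ← hpos1 p hp1, hpos])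
    · have hp2 : p ∈ S2 := (hsdS2 p hp).mpr (hsd ▸ (hsdS2 o ho).mp h)
      exact side_inj S2 f2 l2 hf2 hS2sub h hp2 (by rw [← hpos2 o h, ← hpos2 p hp2, hpos])
  -- hb within a side implies position increase
  have hbpos : ∀ o p, o ∈ opsOf e → p ∈ opsOf e → sd o = sd p → hb e o p → pos o < pos p := by
    intro o p ho hp hsd hhb
    rcases hmem12 o ho with h | h
    · have hp1 : p ∈ S1 := (hsdS1 p hp).mpr (hsd ▸ (hsdS1 o ho).mp h)
      rw [hpos1 o h, hpos1 p hp1]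
      exact side_hb S1 f1 l1 hf1 o p h hp1 hhb
    · have hp2 : p ∈ S2 := (hsdS2 p hp).mpr (hsd ▸ (hsdS2 o ho).mp h)
      rw [hpos2 o h, hpos2 p hp2]
      exact side_hb S2 f2 l2 hf2 o p h hp2 hhb
  -- κ bounds
  have hκc : ∀ o ∈ opsOf e, c o ≤ κ o := by
    intro o ho
    apply Finset.le_sup
    rw [Finset.mem_filter]
    exact ⟨(hΩ o).mpr ho, rfl, le_rfl⟩
  have hκr : ∀ o ∈ opsOf e, κ o ≤ r o := by
    intro o ho
    apply Finset.sup_le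
    intro p hp
    rw [Finset.mem_filter] at hp
    obtain ⟨hpΩ, hsd, hpo⟩ := hp
    have hpe : p ∈ opsOf e := (hΩ p).mp hpΩ
    by_cases hop : p = o
    · subst hop; exact le_of_lt (hcr p hpe)
    · have hlt : pos p < pos o := by
        rcases lt_or_eq_of_le hpo with h | h
        · exact h
        · exact absurd (hsame p o hpe ho hsd h) hop
      by_contra hcon
      push_neg at hcon
      have hhb : hb e o p := (hb_iff o p).mpr ⟨ho, hpe, hcon⟩
      have := hbpos o p ho hpe hsd.symm hhb
      omega
  -- key monotonicity within a side
  have hκmono : ∀ o p, sd p = sd o → pos p ≤ pos o → κ p ≤ κ o := by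
    intro o p hsd hpos
    apply Finset.sup_mono
    intro q hq
    rw [Finset.mem_filter] at hq ⊢
    exact ⟨hq.1, hsd ▸ hq.2.1, le_trans hq.2.2 hpos⟩
  have key_side : ∀ o p, o ∈ opsOf e → p ∈ opsOf e → sd p = sd o → pos p < pos o →
      key p < key o := by
    intro o p ho hp hsd hpos
    have hκ := hκmono o p hsd (le_of_lt hpos)
    simp only [hkeydef]
    apply enc_lt (hposlt p hp)
    rcases lt_or_eq_of_le hκ with h | h
    · left; omega
    · right; rw [h, hsd]; exact ⟨rfl, hpos⟩
  have key_hb : ∀ o p, hb e o p → key o < key p := by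
    intro o p hhb
    obtain ⟨ho, hp, hrc⟩ := (hb_iff o p).mp hhb
    have h1 : κ o < κ p := lt_of_le_of_lt (hκr o ho) (lt_of_lt_of_le hrc (hκc p hp))
    simp only [hkeydef]
    apply enc_lt (hposlt o ho)
    left
    have := hsd1 o
    have := hsd1 p
    omega
  have key_inj : ∀ o p, o ∈ opsOf e → p ∈ opsOf e → key o = key p → o = p := by
    intro o p ho hp hk
    simp only [hkeydef] at hk
    obtain ⟨ha, hb'⟩ := enc_inj (hposlt o ho) (hposlt p hp) hk
    have h1 := hsd1 o
    have h2 := hsd1 p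
    have hsd : sd o = sd p := by omega
    exact hsame o p ho hp hsd hb'
  -- the sorted key list
  set K : Finset ℕ := Ω.image key with hKdef
  set sk : List ℕ := K.sort (· ≤ ·) with hskdef
  have hsknd : sk.Nodup := Finset.sort_nodup _ _
  have hsksort : sk.Pairwise (· < ·) := (Finset.sortedLT_sort K).pairwise
  have hmemsk : ∀ o ∈ opsOf e, key o ∈ sk := by
    intro o ho
    rw [hskdef, Finset.mem_sort, hKdef]
    exact Finset.mem_image_of_mem key ((hΩ o).mpr ho)
  have hexω : ∀ k ∈ sk, ∃ o, o ∈ opsOf e ∧ key o = k := by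
    intro k hk
    rw [hskdef, Finset.mem_sort, hKdef, Finset.mem_image] at hk
    obtain ⟨o, hoΩ, hko⟩ := hk
    exact ⟨o, (hΩ o).mp hoΩ, hko⟩
  choose! ω hω1 hω2 using hexω
  have hωkey : ∀ o ∈ opsOf e, ω (key o) = o := by
    intro o ho
    have hk := hmemsk o ho
    exact key_inj _ _ (hω1 _ hk) ho (hω2 _ hk)
  set g : ℕ → PQOp D P := fun k => mth (ω k) with hgdef
  set l : List (PQOp D P) := sk.map g with hldef
  set f : O → ℕ := fun o => sk.idxOf (key o) with hfdef
  have hllen : l.length = sk.length := by rw [hldef, List.length_map]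
  have hflt : ∀ o ∈ opsOf e, f o < sk.length := by
    intro o ho
    exact List.idxOf_lt_length_iff.mpr (hmemsk o ho)
  have hskf : ∀ o, o ∈ opsOf e → sk[f o]? = some (key o) := by
    intro o ho
    rw [List.getElem?_eq_some_iff]
    exact ⟨hflt o ho, List.getElem_idxOf (hflt o ho)⟩
  have hidx : ∀ i (hi : i < sk.length), sk.idxOf (sk[i]'hi) = i := by
    intro i hi
    have hmem : sk[i]'hi ∈ sk := List.getElem_mem hi
    have hlt := List.idxOf_lt_length_iff.mpr hmem
    exact (List.Nodup.getElem_inj_iff hsknd).mp (List.getElem_idxOf hlt)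
  have hsklt : ∀ i j ki kj : ℕ, i < j → sk[i]? = some ki → sk[j]? = some kj → ki < kj := by
    intro i j ki kj hij hi hj
    obtain ⟨hi', rfl⟩ := List.getElem?_eq_some_iff.mp hi
    obtain ⟨hj', rfl⟩ := List.getElem?_eq_some_iff.mp hj
    exact List.pairwise_iff_getElem.mp hsksort i j hi' hj' hij
  have key_f : ∀ o p, o ∈ opsOf e → p ∈ opsOf e → key o < key p → f o < f p := by
    intro o p ho hp hk
    by_contra hcon
    push_neg at hcon
    rcases lt_or_eq_of_le hcon with h | h
    · have := hsklt (f p) (f o) (key p) (key o) h (hskf p hp) (hskf o ho)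
      omega
    · have h5 := hskf p hp
      rw [h] at h5
      rw [hskf o ho] at h5
      injection h5 with h6
      omega
  have hωf : ∀ i (hi : i < sk.length), ω (sk[i]'hi) ∈ opsOf e ∧ f (ω (sk[i]'hi)) = i := by
    intro i hi
    have hmem : sk[i]'hi ∈ sk := List.getElem_mem hi
    refine ⟨hω1 _ hmem, ?_⟩
    simp only [hfdef]
    rw [hω2 _ hmem]
    exact hidx i hi
  -- IsLin e l f
  have hIsLin : IsLin e l f := by
    refine ⟨⟨?_, ?_, ?_⟩, ?_, ?_⟩
    · intro o ho
      simp only [Set.mem_setOf_eq, hllen]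
      exact hflt o ho
    · intro o ho p hp hfo
      have h1 := hskf o ho
      rw [hfo] at h1
      rw [hskf p hp] at h1
      injection h1 with h3
      exact key_inj o p ho hp h3.symm
    · intro i hi
      simp only [Set.mem_setOf_eq, hllen] at hi
      obtain ⟨hoe, hfi⟩ := hωf i hi
      exact ⟨ω (sk[i]'hi), hoe, hfi⟩
    · intro o m hm
      have ho : o ∈ opsOf e := by
        obtain ⟨i, hi⟩ := hm
        exact ⟨i, m, hi⟩
      have hmeq : m = mth o := by
        obtain ⟨i, hi⟩ := hm
        exact (hcall_uniq o i m ho hi).2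
      rw [hldef, List.getElem?_map]
      rw [hskf o ho]
      simp only [Option.map_some, hgdef]
      rw [hωkey o ho, hmeq]
    · intro o1 o2 hhb
      obtain ⟨ho1, ho2, -⟩ := (hb_iff o1 o2).mp hhb
      exact key_f o1 o2 ho1 ho2 (key_hb o1 o2 hhb)
  -- projections
  have proj_eq : ∀ (S : Set O) (fS : O → ℕ) (lS : List (PQOp D P)) (b : ℕ),
      IsLin (projIds S e) lS fS → S ⊆ opsOf e →
      (∀ o ∈ opsOf e, (o ∈ S ↔ sd o = b)) → (∀ o ∈ S, pos o = fS o) →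
      seqProjIdx l (f '' S) = lS := by
    intro S fS lS b hL hsub hiff hposS
    -- step 1: rewrite as filter on sk mapped by g
    set q : ℕ → Bool := fun k => decide (∃ o ∈ S, key o = k) with hqdef
    have step1 : seqProjIdx l (f '' S) = (sk.filter q).map g := by
      rw [seqProjIdx, hldef, List.zipIdx_map]
      rw [List.filter_map]
      have hcongr : List.filter ((fun x : PQOp D P × ℕ => decide (x.2 ∈ f '' S)) ∘ Prod.map g id)
          sk.zipIdx = List.filter (fun x : ℕ × ℕ => q x.1) sk.zipIdx := by
        apply List.filter_congr
        intro x hx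
        have hx2 : sk[x.2]? = some x.1 := List.mem_zipIdx_iff_getElem?.mp hx
        obtain ⟨hx1lt, hx2eq⟩ := List.getElem?_eq_some_iff.mp hx2
        simp only [Function.comp_apply, Prod.map_snd, id_eq, hqdef, decide_eq_decide]
        constructor
        · rintro ⟨o, hoS, hfo⟩
          refine ⟨o, hoS, ?_⟩
          have h5 := hskf o (hsub hoS)
          rw [hfo] at h5
          rw [hx2] at h5
          injection h5 with h6
          exact h6.symm
        · rintro ⟨o, hoS, hko⟩
          refine ⟨o, hoS, ?_⟩
          simp only [hfdef]
          rw [hko, ← hx2eq]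
          exact hidx x.2 hx1lt
      rw [hcongr, List.map_map]
      have h7 : Prod.fst ∘ Prod.map g (id : ℕ → ℕ) = g ∘ Prod.fst := by
        funext x; cases x; rfl
      rw [h7, ← List.map_map]
      congr 1
      have h8 := (List.filter_map (p := q) (f := Prod.fst) (l := sk.zipIdx)).symm
      rw [show (fun x : ℕ × ℕ => q x.1) = q ∘ Prod.fst from rfl, h8, List.zipIdx_map_fst]
    rw [step1]
    -- step 2: the filtered list
    set t : List ℕ := sk.filter q with htdef
    have htmem : ∀ k, k ∈ t ↔ ∃ o ∈ S, key o = k := by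
      intro k
      rw [htdef, List.mem_filter]
      constructor
      · rintro ⟨-, hk⟩
        exact of_decide_eq_true hk
      · rintro ⟨o, hoS, rfl⟩
        exact ⟨hmemsk o (hsub hoS), by simp [hqdef]; exact ⟨o, hoS, rfl⟩⟩
    have htnd : t.Nodup := List.Nodup.filter _ hsknd
    have htsort : t.Pairwise (· < ·) := List.Pairwise.filter _ hsksort
    -- length of t
    have hcardS : (Ω.filter (fun o => o ∈ S)).card = lS.length := by
      have hcr : (Ω.filter (fun o => o ∈ S)).card = (Finset.range lS.length).card := by
        apply Finset.card_bij (fun o _ => fS o)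
        · intro o ho
          rw [Finset.mem_filter] at ho
          rw [Finset.mem_range]
          exact side_lt S fS lS hL hsub o ho.2
        · intro o ho p hp hfop
          rw [Finset.mem_filter] at ho hp
          exact side_inj S fS lS hL hsub ho.2 hp.2 hfop
        · intro j hj
          rw [Finset.mem_range] at hj
          obtain ⟨o, hoS, hfo⟩ := side_surj S fS lS hL hsub j hj
          exact ⟨o, Finset.mem_filter.mpr ⟨(hΩ o).mpr (hsub hoS), hoS⟩, hfo⟩
      rw [hcr, Finset.card_range]
    have htlen : t.length = lS.length := by
      have hset : t.toFinset = (Finset.filter (fun o => o ∈ S) Ω).image key := by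
        apply Finset.ext
        intro k
        rw [List.mem_toFinset, htmem, Finset.mem_image]
        constructor
        · rintro ⟨o, hoS, rfl⟩
          exact ⟨o, Finset.mem_filter.mpr ⟨(hΩ o).mpr (hsub hoS), hoS⟩, rfl⟩
        · rintro ⟨o, ho, rfl⟩
          rw [Finset.mem_filter] at ho
          exact ⟨o, ho.2, rfl⟩
      have hinj : Set.InjOn key ((Finset.filter (fun o => o ∈ S) Ω) : Set O) := by
        intro o ho p hp hk
        have ho' := Finset.mem_filter.mp (Finset.mem_coe.mp ho)
        have hp' := Finset.mem_filter.mp (Finset.mem_coe.mp hp)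
        exact key_inj o p ((hΩ o).mp ho'.1) ((hΩ p).mp hp'.1) hk
      rw [← List.toFinset_card_of_nodup htnd, hset, Finset.card_image_of_injOn hinj, hcardS]
    -- identify elements of t
    have hti : ∀ i (hi : i < t.length), ω (t[i]'hi) ∈ S ∧ key (ω (t[i]'hi)) = t[i]'hi := by
      intro i hi
      have hmem : t[i]'hi ∈ t := List.getElem_mem hi
      obtain ⟨o, hoS, hko⟩ := (htmem _).mp hmem
      have hoeq : ω (t[i]'hi) = o := by rw [← hko, hωkey o (hsub hoS)]
      refine ⟨?_, ?_⟩
      · rw [hoeq]; exact hoS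
      · rw [hoeq]; exact hko
    have hψ : ∀ i (hi : i < t.length), fS (ω (t[i]'hi)) = i := by
      have hψlt : ∀ i (hi : i < t.length), fS (ω (t[i]'hi)) < t.length := by
        intro i hi
        rw [htlen]
        exact side_lt S fS lS hL hsub _ (hti i hi).1
      let ψ : Fin t.length → Fin t.length := fun i => ⟨fS (ω (t[i.1]'i.2)), hψlt i.1 i.2⟩
      have hmono : StrictMono ψ := by
        intro i j hij
        show fS (ω (t[i.1]'i.2)) < fS (ω (t[j.1]'j.2))
        obtain ⟨hiS, hik⟩ := hti i.1 i.2
        obtain ⟨hjS, hjk⟩ := hti j.1 j.2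
        have htlt : t[i.1]'i.2 < t[j.1]'j.2 :=
          List.pairwise_iff_getElem.mp htsort i.1 j.1 i.2 j.2 hij
        have hklt : key (ω (t[i.1]'i.2)) < key (ω (t[j.1]'j.2)) := by
          rw [hik, hjk]; exact htlt
        have hsdi : sd (ω (t[i.1]'i.2)) = b := (hiff _ (hsub hiS)).mp hiS
        have hsdj : sd (ω (t[j.1]'j.2)) = b := (hiff _ (hsub hjS)).mp hjS
        by_contra hcon
        push_neg at hcon
        rcases lt_or_eq_of_le hcon with h | h
        · have hplt : pos (ω (t[j.1]'j.2)) < pos (ω (t[i.1]'i.2)) := by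
            rw [hposS _ hjS, hposS _ hiS]; exact h
          have := key_side (ω (t[i.1]'i.2)) (ω (t[j.1]'j.2)) (hsub hiS) (hsub hjS)
            (by rw [hsdi, hsdj]) hplt
          omega
        · have hpe : pos (ω (t[i.1]'i.2)) = pos (ω (t[j.1]'j.2)) := by
            rw [hposS _ hiS, hposS _ hjS]; exact h.symm
          have heq := hsame _ _ (hsub hiS) (hsub hjS) (by rw [hsdi, hsdj]) hpe
          rw [heq] at hklt
          omega
      intro i hi
      have hid := strictMono_fin_id ψ hmono ⟨i, hi⟩
      exact congrArg Fin.val hid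
    apply List.ext_getElem?
    intro n'
    by_cases hn : n' < t.length
    · have h9 : t[n']? = some (t[n']'hn) := by
        rw [List.getElem?_eq_some_iff]; exact ⟨hn, rfl⟩
      rw [List.getElem?_map, h9]
      have h10 := side_meth S fS lS hL _ (hti n' hn).1 (hsub (hti n' hn).1)
      rw [hψ n' hn] at h10
      rw [h10]
      simp only [Option.map_some, hgdef]
    · have h11 : lS[n']? = none := List.getElem?_eq_none (by rw [← htlen]; omega)
      have h12 : (List.map g t)[n']? = none := List.getElem?_eq_none (by rw [List.length_map]; omega)
      rw [h11, h12]
  refine ⟨l, f, hIsLin, ?_, ?_⟩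
  · apply proj_eq S1 f1 l1 0 hf1 hS1sub hsdS1 hpos1
  · apply proj_eq S2 f2 l2 1 hf2 hS2sub hsdS2 hpos2
end

section
/- Let l = l1 · l2 ∈ SeqPQ be a data-differentiated sequential execution containing no rm(empty), and let p be a maximal priority of l. Let l3 be the projection of l2 to the put operations with priority p, and l4 the projection of l2 to all its other operations. Then l1 · l3 · l4 ∈ SeqPQ. -/
open Classical

universe u v w

section HoistAux

variable {D : Type u} {P : Type v} [PartialOrder P]

lemma pqReach_append_split {q q'' : PQState D P} {u v : List (PQOp D P)}
    (h : pqReach q (u ++ v) q'') : ∃ q', pqReach q u q' ∧ pqReach q' v q'' := by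
  induction u generalizing q with
  | nil => exact ⟨q, pqReach.nil q, h⟩
  | cons op u ih =>
    obtain ⟨qm, hstep, hrest⟩ : ∃ qm, pqStep q op qm ∧ pqReach qm (u ++ v) q'' := by
      cases h with
      | cons hs hr => exact ⟨_, hs, hr⟩
    obtain ⟨q', h1, h2⟩ := ih hrest
    exact ⟨q', pqReach.cons hstep h1, h2⟩

lemma pqReach_append_comb {q q' q'' : PQState D P} {u v : List (PQOp D P)}
    (h1 : pqReach q u q') (h2 : pqReach q' v q'') : pqReach q (u ++ v) q'' := by
  induction h1 with
  | nil => exact h2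
  | cons hstep _ ih => exact pqReach.cons hstep (ih h2)

lemma pqReach_support {q q' : PQState D P} {e : List (PQOp D P)}
    (h : pqReach q e q') : ∀ r, q' r ≠ [] → q r ≠ [] ∨ ∃ a, PQOp.put a r ∈ e := by
  induction h with
  | nil => exact fun r hr => Or.inl hr
  | @cons q q' q'' op l hstep hrest ih =>
    intro r hr
    rcases ih r hr with h1 | ⟨a, ha⟩
    · cases op with
      | put a s =>
        obtain ⟨hs1, hs2⟩ := hstep
        by_cases hrs : r = s
        · subst hrs; exact Or.inr ⟨a, List.mem_cons_self⟩
        · rw [hs2 r hrs] at h1; exact Or.inl h1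
      | rm a =>
        obtain ⟨s, l', hqs, hq's, hoth, hlt⟩ := hstep
        by_cases hrs : r = s
        · subst hrs; left; rw [hqs]; simp
        · rw [hoth r hrs] at h1; exact Or.inl h1
      | rmEmpty a =>
        obtain ⟨heq, _⟩ := hstep
        rw [heq] at h1; exact Or.inl h1
    · exact Or.inr ⟨a, List.mem_cons_of_mem _ ha⟩

lemma not_isPutPri_put {p s : P} (a : D) (hsp : s ≠ p) : ¬ isPutPri p (PQOp.put a s) := by
  rintro ⟨b, h⟩
  cases h
  exact hsp rfl

lemma not_isPutPri_rm {p : P} (a : D) : ¬ isPutPri p (PQOp.rm a) := by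
  rintro ⟨b, h⟩
  cases h

lemma pqReach_puts (p : P) :
    ∀ (A : List (PQOp D P)), (∀ op ∈ A, isPutPri p op) → ∀ q : PQState D P,
      pqReach q A (fun r => if r = p then (A.map PQOp.val).reverse ++ q r else q r) := by
  intro A
  induction A with
  | nil =>
    intro _ q
    have heq : (fun r => if r = p then ((([] : List (PQOp D P)).map PQOp.val)).reverse ++ q r else q r) = q := by
      funext r; split <;> simp
    rw [heq]
    exact pqReach.nil q
  | cons op A ih =>
    intro hall q
    obtain ⟨a, rfl⟩ := hall op (List.mem_cons_self)
    have hstep : pqStep q (PQOp.put a p)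
        (fun r => if r = p then a :: q r else q r) :=
      ⟨by simp, fun r hr => by simp [hr]⟩
    have hrest := ih (fun op h => hall op (List.mem_cons_of_mem _ h))
      (fun r => if r = p then a :: q r else q r)
    have heq : (fun r => if r = p then (A.map PQOp.val).reverse ++
          (if r = p then a :: q r else q r) else (if r = p then a :: q r else q r))
        = (fun r => if r = p then ((PQOp.put a p :: A).map PQOp.val).reverse ++ q r else q r) := by
      funext r
      by_cases hr : r = p <;> simp [hr, PQOp.val]
    rw [heq] at hrest
    exact pqReach.cons hstep hrest

lemma hoist_main (p : P) :
    ∀ (l2 : List (PQOp D P)) (q qf qh : PQState D P),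
      pqReach q l2 qf →
      (∀ r, q r ≠ [] → ¬ p < r) →
      (∀ a r, PQOp.put a r ∈ l2 → ¬ p < r) →
      (∀ a, PQOp.rmEmpty a ∉ l2) →
      (∀ r, r ≠ p → qh r = q r) →
      (qh p = ((l2.filter fun op => decide (isPutPri p op)).map PQOp.val).reverse ++ q p) →
      ∃ qf', pqReach qh (l2.filter fun op => decide (¬ isPutPri p op)) qf' := by
  intro l2
  induction l2 with
  | nil =>
    intro q qf qh _ _ _ _ _ _
    exact ⟨qh, by simpa using pqReach.nil qh⟩
  | cons op l2 ih =>
    intro q qf qh hreach hq hput hnoE hoth hp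
    obtain ⟨q', hstep, hrest⟩ : ∃ q', pqStep q op q' ∧ pqReach q' l2 qf := by
      cases hreach with
      | cons hs hr => exact ⟨_, hs, hr⟩
    have hput' : ∀ a r, PQOp.put a r ∈ l2 → ¬ p < r :=
      fun a r h => hput a r (List.mem_cons_of_mem _ h)
    have hnoE' : ∀ a, PQOp.rmEmpty a ∉ l2 :=
      fun a h => hnoE a (List.mem_cons_of_mem _ h)
    cases op with
    | put a s =>
      obtain ⟨hs1, hs2⟩ := hstep
      have hq' : ∀ r, q' r ≠ [] → ¬ p < r := by
        intro r hr
        by_cases hrs : r = s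
        · subst hrs; exact hput a r (List.mem_cons_self)
        · rw [hs2 r hrs] at hr; exact hq r hr
      by_cases hsp : s = p
      · subst hsp
        have hd1 : decide (isPutPri s (PQOp.put a s)) = true := decide_eq_true ⟨a, rfl⟩
        have hd2 : decide (¬ isPutPri s (PQOp.put a s)) = false :=
          decide_eq_false (by simp [isPutPri])
        rw [List.filter_cons_of_pos (p := fun op => decide (isPutPri s op)) hd1] at hp
        rw [List.filter_cons_of_neg (p := fun op => decide (¬ isPutPri s op)) (by simp [hd2])]
        refine ih q' qf qh hrest hq' hput' hnoE' ?_ ?_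
        · intro r hr; rw [hoth r hr, hs2 r hr]
        · rw [hs1, hp]; simp [PQOp.val]
      · have hd1 : decide (isPutPri p (PQOp.put a s)) = false :=
          decide_eq_false (not_isPutPri_put a hsp)
        have hd2 : decide (¬ isPutPri p (PQOp.put a s)) = true :=
          decide_eq_true (not_isPutPri_put a hsp)
        rw [List.filter_cons_of_neg (by simp [hd1])] at hp
        rw [List.filter_cons_of_pos (p := fun op => decide (¬ isPutPri p op)) hd2]
        set qh' : PQState D P := fun r => if r = s then a :: qh r else qh r with hqh'
        have hstep' : pqStep qh (PQOp.put a s) qh' := ⟨by simp [hqh'], fun r hr => by simp [hqh', hr]⟩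
        have hoth2 : ∀ r, r ≠ p → qh' r = q' r := by
          intro r hr
          by_cases hrs : r = s
          · subst hrs
            simp only [hqh', if_pos rfl]
            rw [hoth r hr, hs1]
          · simp only [hqh', if_neg hrs]
            rw [hoth r hr, hs2 r hrs]
        have hp2 : qh' p = ((l2.filter fun op => decide (isPutPri p op)).map PQOp.val).reverse ++ q' p := by
          simp only [hqh', if_neg (Ne.symm hsp)]
          rw [hp, hs2 p (Ne.symm hsp)]
        obtain ⟨qf', hfin⟩ := ih q' qf qh' hrest hq' hput' hnoE' hoth2 hp2
        exact ⟨qf', pqReach.cons hstep' hfin⟩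
    | rm a =>
      obtain ⟨s, l', hqs, hq's, hoth', hlt⟩ := hstep
      have hd1 : decide (isPutPri p (PQOp.rm a)) = false :=
        decide_eq_false (not_isPutPri_rm a)
      have hd2 : decide (¬ isPutPri p (PQOp.rm a)) = true :=
        decide_eq_true (not_isPutPri_rm a)
      rw [List.filter_cons_of_neg (by simp [hd1])] at hp
      rw [List.filter_cons_of_pos (p := fun op => decide (¬ isPutPri p op)) hd2]
      have hq' : ∀ r, q' r ≠ [] → ¬ p < r := by
        intro r hr
        by_cases hrs : r = s
        · subst hrs
          exact hq r (by rw [hqs]; simp)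
        · rw [hoth' r hrs] at hr; exact hq r hr
      by_cases hsp : s = p
      · subst hsp
        set pend := ((l2.filter fun op => decide (isPutPri s op)).map PQOp.val).reverse with hpend
        set qh' : PQState D P := fun r => if r = s then pend ++ l' else qh r with hqh'
        have hstep' : pqStep qh (PQOp.rm a) qh' := by
          refine ⟨s, pend ++ l', ?_, by simp [hqh'], fun r hr => by simp [hqh', hr], ?_⟩
          · rw [hp, hqs]; simp
          · intro r hr
            have hrs : r ≠ s := ne_of_lt hr
            rw [hoth r hrs]
            exact hlt r hr
        have hoth2 : ∀ r, r ≠ s → qh' r = q' r := by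
          intro r hr
          simp only [hqh', if_neg hr]
          rw [hoth r hr, hoth' r hr]
        have hp2 : qh' s = ((l2.filter fun op => decide (isPutPri s op)).map PQOp.val).reverse ++ q' s := by
          simp only [hqh', if_pos rfl]
          rw [hq's]
        obtain ⟨qf', hfin⟩ := ih q' qf qh' hrest hq' hput' hnoE' hoth2 hp2
        exact ⟨qf', pqReach.cons hstep' hfin⟩
      · have hps : ¬ p < s := hq s (by rw [hqs]; simp)
        set qh' : PQState D P := fun r => if r = s then l' else qh r with hqh'
        have hstep' : pqStep qh (PQOp.rm a) qh' := by
          refine ⟨s, l', ?_, by simp [hqh'], fun r hr => by simp [hqh', hr], ?_⟩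
          · rw [hoth s hsp, hqs]
          · intro r hr
            have hrp : r ≠ p := by rintro rfl; exact hps hr
            rw [hoth r hrp]
            exact hlt r hr
        have hoth2 : ∀ r, r ≠ p → qh' r = q' r := by
          intro r hr
          by_cases hrs : r = s
          · subst hrs
            simp only [hqh', if_pos rfl]
            rw [hq's]
          · simp only [hqh', if_neg hrs]
            rw [hoth r hr, hoth' r hrs]
        have hp2 : qh' p = ((l2.filter fun op => decide (isPutPri p op)).map PQOp.val).reverse ++ q' p := by
          simp only [hqh', if_neg (Ne.symm hsp)]
          rw [hp, hoth' p (Ne.symm hsp)]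
        obtain ⟨qf', hfin⟩ := ih q' qf qh' hrest hq' hput' hnoE' hoth2 hp2
        exact ⟨qf', pqReach.cons hstep' hfin⟩
    | rmEmpty a =>
      exact absurd (List.mem_cons_self) (hnoE a)

end HoistAux

/-- puts of a maximal priority `p` in the second part of a trace can be hoisted
to the front of that part. -/
theorem hoist_max_priority_puts_still_seqPQ {D : Type u} {P : Type v} [PartialOrder P]
    (l1 l2 : List (PQOp D P)) (hl : SeqPQ (l1 ++ l2)) (hd : SeqDiff (l1 ++ l2))
    (hne : ¬ HasEmptyRemovesSeq (l1 ++ l2))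
    (p : P) (hp : p ∈ prioritiesSeq (l1 ++ l2))
    (hmax : ∀ q ∈ prioritiesSeq (l1 ++ l2), ¬ p < q) :
    SeqPQ (l1 ++ (l2.filter fun op => decide (isPutPri p op)) ++
      (l2.filter fun op => decide (¬ isPutPri p op))) := by
  obtain ⟨qf, hreach⟩ := hl
  obtain ⟨q0, h1, h2⟩ := pqReach_append_split hreach
  have hall : ∀ op ∈ l2.filter (fun op => decide (isPutPri p op)), isPutPri p op := by
    intro op hop
    exact of_decide_eq_true (List.mem_filter.mp hop).2
  have hA := pqReach_puts p (l2.filter fun op => decide (isPutPri p op)) hall q0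
  have hq0 : ∀ r, q0 r ≠ [] → ¬ p < r := by
    intro r hr
    rcases pqReach_support h1 r hr with h | ⟨a, ha⟩
    · exact absurd rfl h
    · exact hmax r ⟨a, List.mem_append_left _ ha⟩
  obtain ⟨qf', h3⟩ := hoist_main p l2 q0 qf
    (fun r => if r = p then ((l2.filter fun op => decide (isPutPri p op)).map PQOp.val).reverse ++ q0 r else q0 r)
    h2 hq0
    (fun a r h => hmax r ⟨a, List.mem_append_right _ h⟩)
    (fun a h => hne ⟨a, List.mem_append_right _ h⟩)
    (fun r hr => if_neg hr) (if_pos rfl)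
  exact ⟨qf', pqReach_append_comb (pqReach_append_comb h1 hA) h3⟩
end
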